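/- arXiv:1006.5280 — 3 statements merged into one kernel-verified Lean document; each statement's English description precedes it below -/
import Mathlib

section
/- If a set Q of quartets defines a phylogenetic tree T with |L(T)| = n, then |Q| ≥ n − 3; moreover, if |Q| = n − 3, then every quartet in Q distinguishes an interior edge of T. -/
noncomputable section

attribute [local instance] Classical.propDecidable

/-- The simple graph on `ℕ` whose edges are the elements of the finite edge set `E`. -/
def graphOfEdges (E : Finset (Sym2 ℕ)) : SimpleGraph ℕ where
  Adj u v := u ≠ v ∧ s(u, v) ∈ E
  symm := by
    constructor
    intro u v h
    refine ⟨h.1.symm, ?_⟩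
    rw [Sym2.eq_swap]
    exact h.2
  loopless := by constructor; intro v h; exact h.1 rfl

/-- The degree of `v` with respect to the edge set `E`. -/
def degOf (E : Finset (Sym2 ℕ)) (v : ℕ) : ℕ := (E.filter (fun e => v ∈ e)).card

/-- A phylogenetic tree: a finite tree (connected acyclic graph), with vertices
taken from `ℕ`, having no vertex of degree 2. -/
structure PhyloTree where
  verts : Finset ℕ
  edges : Finset (Sym2 ℕ)
  edge_verts : ∀ e ∈ edges, ∀ x ∈ e, x ∈ verts
  not_diag : ∀ e ∈ edges, ¬ e.IsDiag
  conn : ∀ u ∈ verts, ∀ v ∈ verts, (graphOfEdges edges).Reachable u v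
  acyclic : (graphOfEdges edges).IsAcyclic
  verts_nonempty : verts.Nonempty
  no_deg_two : ∀ v ∈ verts, degOf edges v ≠ 2

namespace PhyloTree

/-- The underlying simple graph of a phylogenetic tree. -/
def graph (T : PhyloTree) : SimpleGraph ℕ := graphOfEdges T.edges

/-- The set of leaves (vertices of degree 1), i.e. the taxa set `L(T)`. -/
def leaves (T : PhyloTree) : Finset ℕ := T.verts.filter (fun v => degOf T.edges v = 1)

/-- The interior (non-leaf) vertices. -/
def interiorVerts (T : PhyloTree) : Finset ℕ := T.verts.filter (fun v => degOf T.edges v ≠ 1)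

/-- The set `Ė(T)` of interior edges: edges joining two interior vertices. -/
def interiorEdges (T : PhyloTree) : Finset (Sym2 ℕ) :=
  T.edges.filter (fun e => ∀ x ∈ e, degOf T.edges x ≠ 1)

/-- A phylogenetic tree is binary if every interior vertex has degree 3. -/
def IsBinary (T : PhyloTree) : Prop :=
  ∀ v ∈ T.verts, degOf T.edges v ≠ 1 → degOf T.edges v = 3

/-- `T` displays the quartet `ab|cd`: all four are leaves of `T` and the path
from `a` to `b` and the path from `c` to `d` in `T` are vertex-disjoint. -/
def DisplaysQuartet (T : PhyloTree) (a b c d : ℕ) : Prop :=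
  a ∈ T.leaves ∧ b ∈ T.leaves ∧ c ∈ T.leaves ∧ d ∈ T.leaves ∧
  a ≠ b ∧ c ≠ d ∧
  ∃ (p : T.graph.Walk a b) (q : T.graph.Walk c d),
    p.IsPath ∧ q.IsPath ∧ p.support.Disjoint q.support

/-- `T` displays the binary phylogenetic tree `T'`; for binary `T'` this is
equivalent to `T'` being the restriction of `T` to `L(T')`, and it is expressed
by saying that every quartet displayed by `T'` is displayed by `T`. -/
def Displays (T T' : PhyloTree) : Prop :=
  T'.leaves ⊆ T.leaves ∧
  ∀ a b c d : ℕ, T'.DisplaysQuartet a b c d → T.DisplaysQuartet a b c d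

/-- Two phylogenetic trees are the same (isomorphic): equal leaf sets and a graph
isomorphism mapping every leaf to itself. -/
def Iso (T1 T2 : PhyloTree) : Prop :=
  T1.leaves = T2.leaves ∧
  ∃ φ : ℕ → ℕ, Set.BijOn φ ↑T1.verts ↑T2.verts ∧ (∀ l ∈ T1.leaves, φ l = l) ∧
    ∀ u ∈ T1.verts, ∀ v ∈ T1.verts, (s(u, v) ∈ T1.edges ↔ s(φ u, φ v) ∈ T2.edges)

end PhyloTree

/-- A quartet: a binary phylogenetic tree with exactly four leaves. -/
def IsQuartet (q : PhyloTree) : Prop := q.IsBinary ∧ q.leaves.card = 4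

/-- `L(P)`: the union of the leaf sets of the trees in `P`. -/
def leafSet (P : Finset PhyloTree) : Finset ℕ := P.sup PhyloTree.leaves

/-- `P` defines `T`: `T` is the unique (up to leaf-fixing isomorphism) phylogenetic
tree with taxa set `L(P)` displaying every member of `P`. -/
def Defines (P : Finset PhyloTree) (T : PhyloTree) : Prop :=
  T.leaves = leafSet P ∧ (∀ q ∈ P, T.Displays q) ∧
  ∀ T' : PhyloTree, T'.leaves = leafSet P → (∀ q ∈ P, T'.Displays q) → T'.Iso T

/-- `P` is definitive: exactly one phylogenetic tree with taxa set `L(P)` displays `P`. -/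
def Definitive (P : Finset PhyloTree) : Prop := ∃ T, Defines P T

/-- The quartet `ab|cd` distinguishes the edge `e` of `T`: `T` displays `ab|cd`
and `e` is the only edge that the path from `a` to `c` and the path from `b` to
`d` in `T` have in common. -/
def Distinguishes (T : PhyloTree) (a b c d : ℕ) (e : Sym2 ℕ) : Prop :=
  T.DisplaysQuartet a b c d ∧
  ∃ (p : T.graph.Walk a c) (q : T.graph.Walk b d),
    p.IsPath ∧ q.IsPath ∧ p.edges.toFinset ∩ q.edges.toFinset = {e}

/-- The quartet tree `q` distinguishes the edge `e` of `T`: `q` is the quartet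
`ab|cd` for some leaves `a,b,c,d` and `ab|cd` distinguishes `e` in `T`. -/
def QuartetDistinguishes (T q : PhyloTree) (e : Sym2 ℕ) : Prop :=
  ∃ a b c d : ℕ, q.DisplaysQuartet a b c d ∧ Distinguishes T a b c d e

/-!
An edge `f` of `T` separates two vertices when they lie in different components of `T - f`.
`T` displays `ab|cd` iff some edge separates `{a, b}` from `{c, d}`, and `ab|cd` distinguishes
`e` iff `e` is the only such edge.

Suppose `Q` defines `T`. Then `T` is binary: otherwise, splitting a vertex `w` of degree at least
four into an edge `w - w'` and moving two neighbours of `w` to `w'` gives a tree with one vertex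
more that still displays every quartet displayed by `T`, against uniqueness. Likewise every
interior edge `e` is distinguished by a quartet of `Q`, for otherwise contracting `e` gives a tree
with one vertex less that still displays `Q`. Both modified graphs are recognised as trees by
counting: they are connected and have one edge fewer than vertices. A quartet displays only one
split of its four leaves, so it distinguishes at most one edge. Hence choosing for every interior
edge a quartet distinguishing it is injective, and `|Q| ≥ |Ė(T)| = n - 3`, the number of interior
edges of a binary tree with `n ≥ 4` leaves; in case of equality this choice is onto `Q`.
-/

open SimpleGraph

namespace SimpleGraph

variable {V W : Type*} {G : SimpleGraph V}

theorem Reachable.lift {H : SimpleGraph W} (φ : V → W)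
    (h : ∀ a b, G.Adj a b → H.Reachable (φ a) (φ b)) {x y : V} (hxy : G.Reachable x y) :
    H.Reachable (φ x) (φ y) := by
  rw [reachable_iff_reflTransGen] at hxy ⊢
  exact Relation.ReflTransGen.lift' φ
    (fun a b hab => (reachable_iff_reflTransGen _ _).1 (h a b hab)) x y hxy

theorem Reachable.deleteEdges_or {u v x : V} (h : G.Reachable u x) :
    (G.deleteEdges {s(u, v)}).Reachable u x ∨ (G.deleteEdges {s(u, v)}).Reachable v x := by
  rw [reachable_iff_reflTransGen] at h
  induction h with
  | refl => exact .inl .rfl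
  | @tail y z _ hyz ih =>
    by_cases he : s(y, z) = s(u, v)
    · rcases Sym2.eq_iff.1 he with ⟨-, rfl⟩ | ⟨-, rfl⟩
      · exact .inr .rfl
      · exact .inl .rfl
    · have hyz' : (G.deleteEdges {s(u, v)}).Adj y z := by simp [hyz, he]
      exact ih.imp (·.trans hyz'.reachable) (·.trans hyz'.reachable)

theorem Walk.reachable_deleteEdges {u v : V} (p : G.Walk u v) {f : Sym2 V} (hf : f ∉ p.edges) :
    (G.deleteEdges {f}).Reachable u v :=
  ⟨p.toDeleteEdges {f} (by rintro e he rfl; exact hf he)⟩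

end SimpleGraph

theorem Finset.exists_rel_of_card_le_of_forall_subsingleton {α β : Type*} (r : α → β → Prop)
    {s : Finset α} {t : Finset β} (hs : ∀ a ∈ s, ∃ b ∈ t, r a b)
    (ht : ∀ b ∈ t, {a | a ∈ s ∧ r a b}.Subsingleton) (hcard : t.card ≤ s.card) :
    ∀ b ∈ t, ∃ a ∈ s, r a b := by
  choose f hft hr using hs
  have hinj : Function.Injective fun a : s => f a a.2 := fun a₁ a₂ h =>
    Subtype.ext (ht _ (hft a₁ a₁.2) ⟨a₁.2, hr a₁ a₁.2⟩
      ⟨a₂.2, by rw [show f a₁ a₁.2 = f a₂ a₂.2 from h]; exact hr a₂ a₂.2⟩)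
  have himage : s.attach.image (fun a : s => f a a.2) = t := by
    refine Finset.eq_of_subset_of_card_le (fun b hb => ?_) ?_
    · obtain ⟨a, -, rfl⟩ := Finset.mem_image.1 hb
      exact hft a a.2
    · rwa [Finset.card_image_of_injective _ hinj, Finset.card_attach]
  intro b hb
  obtain ⟨a, -, rfl⟩ := Finset.mem_image.1 (himage ▸ hb)
  exact ⟨a, a.2, hr a a.2⟩

section GraphOfEdges

variable {E : Finset (Sym2 ℕ)}

lemma edgeSet_graphOfEdges (hE : ∀ e ∈ E, ¬ e.IsDiag) : (graphOfEdges E).edgeSet = E := by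
  ext e
  induction e using Sym2.ind with
  | _ x y => exact ⟨fun h => h.2, fun h => ⟨fun hxy => hE _ h (Sym2.mk_isDiag_iff.2 hxy), h⟩⟩

/-- The count is made in the restriction of `graphOfEdges E` to `V`, a finite connected graph. -/
lemma isAcyclic_graphOfEdges_iff {V : Finset ℕ} (hEV : ∀ e ∈ E, ∀ x ∈ e, x ∈ V)
    (hE : ∀ e ∈ E, ¬ e.IsDiag) (hconn : ∀ u ∈ V, ∀ v ∈ V, (graphOfEdges E).Reachable u v)
    (hV : V.Nonempty) : (graphOfEdges E).IsAcyclic ↔ E.card + 1 = V.card := by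
  set G' := (graphOfEdges E).induce (V : Set ℕ)
  have hsupp : ∀ {x y} (w : (graphOfEdges E).Walk x y), y ∈ V → ∀ z ∈ w.support, z ∈ V := by
    intro x y w hy z hz
    rcases Walk.mem_support_iff_exists_mem_edges.1 hz with rfl | ⟨e, he, hze⟩
    · exact hy
    · exact hEV e (by simpa [edgeSet_graphOfEdges hE] using w.edges_subset_edgeSet he) z hze
  have hconn' : G'.Connected := by
    refine (connected_iff _).2 ⟨fun u v => ?_, ⟨⟨_, hV.choose_spec⟩⟩⟩
    obtain ⟨w⟩ := hconn u u.2 v v.2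
    exact ⟨w.induce _ (hsupp w v.2)⟩
  have hacyc : (graphOfEdges E).IsAcyclic ↔ G'.IsAcyclic := by
    refine ⟨fun h => h.induce _, fun h v c hc => h (c.induce _ (hsupp c ?_)) ?_⟩
    · exact hEV _ (c.adj_snd hc.not_nil).2 v (Sym2.mem_mk_left _ _)
    · rwa [← Walk.isCycle_map_iff_of_injective (f := (Embedding.induce (V : Set ℕ)).toHom)
        Subtype.val_injective, Walk.map_induce]
  have hedges : Nat.card G'.edgeSet = E.card := by
    have himage : Sym2.map Subtype.val '' G'.edgeSet = E := by
      ext e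
      induction e using Sym2.ind with
      | _ x y =>
        refine ⟨fun ⟨e', he', hxy⟩ => ?_, fun h => ?_⟩
        · induction e' using Sym2.ind with
          | _ a b =>
            rw [Sym2.map_mk] at hxy
            exact hxy ▸ he'.2
        · refine ⟨s(⟨x, hEV _ h x (Sym2.mem_mk_left _ _)⟩, ⟨y, hEV _ h y (Sym2.mem_mk_right _ _)⟩),
            ⟨fun hxy => hE _ h (Sym2.mk_isDiag_iff.2 hxy), h⟩, rfl⟩
    rw [Nat.card_coe_set_eq, ← Set.ncard_image_of_injective _
      (Sym2.map.injective Subtype.val_injective), himage, Set.ncard_coe_finset]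
  have hverts : Nat.card (V : Set ℕ) = V.card := by
    rw [Nat.card_coe_set_eq, Set.ncard_coe_finset]
  rw [hacyc, ← hedges, ← hverts, ← isTree_iff_connected_and_card.trans (and_iff_right hconn')]
  exact ⟨fun h => ⟨hconn', h⟩, IsTree.isAcyclic⟩

variable {g : Sym2 ℕ} {x : ℕ}

lemma degOf_pos (hg : g ∈ E) (hx : x ∈ g) : 0 < degOf E x :=
  Finset.card_pos.2 ⟨g, Finset.mem_filter.2 ⟨hg, hx⟩⟩

lemma degOf_insert (hg : g ∉ E) :
    degOf (insert g E) x = degOf E x + if x ∈ g then 1 else 0 := by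
  unfold degOf
  rw [Finset.filter_insert]
  split_ifs with hx
  · exact Finset.card_insert_of_notMem fun h => hg (Finset.mem_filter.1 h).1
  · rfl

lemma degOf_erase (hg : g ∈ E) :
    degOf (E.erase g) x + (if x ∈ g then 1 else 0) = degOf E x := by
  unfold degOf
  rw [Finset.filter_erase]
  split_ifs with hx
  · exact Finset.card_erase_add_one (Finset.mem_filter.2 ⟨hg, hx⟩)
  · rw [Finset.erase_eq_of_notMem (s := E.filter _) fun h => hx (Finset.mem_filter.1 h).2,
      add_zero]

lemma degOf_image {φ : Sym2 ℕ → Sym2 ℕ} (hφ : Set.InjOn φ E) :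
    degOf (E.image φ) x = (E.filter fun g => x ∈ φ g).card := by
  unfold degOf
  rw [Finset.filter_image, Finset.card_image_of_injOn (hφ.mono (Finset.filter_subset _ _))]

end GraphOfEdges

namespace PhyloTree

variable {T : PhyloTree}

lemma edgeSet_graph : T.graph.edgeSet = T.edges := edgeSet_graphOfEdges T.not_diag

lemma card_edges_add_one : T.edges.card + 1 = T.verts.card :=
  (isAcyclic_graphOfEdges_iff T.edge_verts T.not_diag T.conn T.verts_nonempty).1 T.acyclic

lemma mem_edges_of_mem_walk {x y : ℕ} {p : T.graph.Walk x y} {f : Sym2 ℕ} (hf : f ∈ p.edges) :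
    f ∈ T.edges := by
  simpa [edgeSet_graph] using p.edges_subset_edgeSet hf

lemma ne_of_mem_edges {x y : ℕ} (h : s(x, y) ∈ T.edges) : x ≠ y :=
  fun hxy => T.not_diag _ h (Sym2.mk_isDiag_iff.2 hxy)

lemma mem_verts_of_mem_leaves {x : ℕ} (hx : x ∈ T.leaves) : x ∈ T.verts :=
  (Finset.mem_filter.1 hx).1

def Separates (T : PhyloTree) (f : Sym2 ℕ) (x y : ℕ) : Prop :=
  ¬ (T.graph.deleteEdges {f}).Reachable x y

lemma Separates.symm {f : Sym2 ℕ} {x y : ℕ} (h : T.Separates f x y) : T.Separates f y x :=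
  fun hr => h hr.symm

lemma Separates.ne {f : Sym2 ℕ} {x y : ℕ} (h : T.Separates f x y) : x ≠ y := by
  rintro rfl
  exact h .rfl

lemma separates_of_mem_edges {x y : ℕ} (h : s(x, y) ∈ T.edges) : T.Separates s(x, y) x y :=
  isBridge_iff.1 (isAcyclic_iff_forall_adj_isBridge.1 T.acyclic ⟨ne_of_mem_edges h, h⟩)

lemma mem_edges_iff_separates {x y : ℕ} {p : T.graph.Walk x y} (hp : p.IsPath) {f : Sym2 ℕ} :
    f ∈ p.edges ↔ T.Separates f x y := by
  refine ⟨fun hf ⟨q⟩ => ?_, fun h => by_contra fun hf => h (p.reachable_deleteEdges hf)⟩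
  have hq : q.bypass.transfer T.graph (fun e he => (edgeSet_mono (deleteEdges_le _))
      (q.bypass.edges_subset_edgeSet he)) = p :=
    congrArg Subtype.val ((T.acyclic.subsingleton_path _ _).elim
      ⟨_, q.bypass_isPath.transfer _⟩ ⟨p, hp⟩)
  rw [← hq, Walk.edges_transfer] at hf
  simpa using q.bypass.edges_subset_edgeSet hf

lemma reachable_deleteEdges_or {u v x : ℕ} (huv : s(u, v) ∈ T.edges) (hx : x ∈ T.verts) :
    (T.graph.deleteEdges {s(u, v)}).Reachable u x ∨
      (T.graph.deleteEdges {s(u, v)}).Reachable v x :=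
  (T.conn u (T.edge_verts _ huv u (Sym2.mem_mk_left _ _)) x hx).deleteEdges_or

lemma reachable_deleteEdges_of_separates_of_separates {f : Sym2 ℕ} (hf : f ∈ T.edges)
    {x y z : ℕ} (hx : x ∈ T.verts) (hy : y ∈ T.verts) (hz : z ∈ T.verts)
    (hxz : T.Separates f x z) (hyz : T.Separates f y z) :
    (T.graph.deleteEdges {f}).Reachable x y := by
  induction f using Sym2.ind with
  | _ u v =>
    rcases reachable_deleteEdges_or hf hx with hx | hx <;>
    rcases reachable_deleteEdges_or hf hy with hy | hy <;>
    rcases reachable_deleteEdges_or hf hz with hz | hz <;>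
    first
      | exact hx.symm.trans hy
      | exact (hxz (hx.symm.trans hz)).elim
      | exact (hyz (hy.symm.trans hz)).elim

lemma Separates.map {T' : PhyloTree} (φ : ℕ → ℕ) {p q : ℕ} {f' : Sym2 ℕ}
    (hpq : s(p, q) ∈ T.edges)
    (hφ : ∀ a b, (T.graph.deleteEdges {s(p, q)}).Adj a b →
      (T'.graph.deleteEdges {f'}).Reachable (φ a) (φ b))
    (hf' : T'.Separates f' (φ p) (φ q)) {x y : ℕ} (hx : x ∈ T.verts) (hy : y ∈ T.verts)
    (h : T.Separates s(p, q) x y) : T'.Separates f' (φ x) (φ y) := by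
  intro hxy
  have lift := fun {a b} (r : (T.graph.deleteEdges {s(p, q)}).Reachable a b) => r.lift φ hφ
  rcases reachable_deleteEdges_or hpq hx with hx | hx <;>
  rcases reachable_deleteEdges_or hpq hy with hy | hy
  · exact h (hx.symm.trans hy)
  · exact hf' ((lift hx).trans (hxy.trans (lift hy).symm))
  · exact hf' ((lift hy).trans (hxy.symm.trans (lift hx).symm))
  · exact h (hx.symm.trans hy)

def SeparatesSets (T : PhyloTree) (f : Sym2 ℕ) (A C : Finset ℕ) : Prop :=
  ∀ x ∈ A, ∀ y ∈ C, T.Separates f x y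

lemma separatesSets_pair_iff {f : Sym2 ℕ} {a b c d : ℕ} :
    T.SeparatesSets f {a, b} {c, d} ↔
      T.Separates f a c ∧ T.Separates f a d ∧ T.Separates f b c ∧ T.Separates f b d := by
  simp [SeparatesSets, and_assoc]

lemma SeparatesSets.symm {f : Sym2 ℕ} {A C : Finset ℕ} (h : T.SeparatesSets f A C) :
    T.SeparatesSets f C A :=
  fun x hx y hy => (h y hy x hx).symm

lemma SeparatesSets.disjoint {f : Sym2 ℕ} {A C : Finset ℕ} (h : T.SeparatesSets f A C) :
    Disjoint A C :=
  Finset.disjoint_left.2 fun x hA hC => (h x hA x hC).ne rfl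

variable {a b c d : ℕ}

lemma displaysQuartet_iff :
    T.DisplaysQuartet a b c d ↔
      a ∈ T.leaves ∧ b ∈ T.leaves ∧ c ∈ T.leaves ∧ d ∈ T.leaves ∧ a ≠ b ∧ c ≠ d ∧
        ∃ f ∈ T.edges, T.SeparatesSets f {a, b} {c, d} := by
  refine and_congr_right fun ha => and_congr_right fun hb => and_congr_right fun hc =>
    and_congr_right fun hd => and_congr_right fun _ => and_congr_right fun _ => ?_
  have hV := fun {x} (hx : x ∈ T.leaves) => mem_verts_of_mem_leaves hx
  constructor
  · rintro ⟨p, q, -, -, hdisj⟩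
    obtain ⟨w⟩ := T.conn a (hV ha) c (hV hc)
    obtain ⟨dt, hdt, hfst, hsnd⟩ :=
      w.bypass.exists_boundary_dart {z | z ∈ p.support} p.start_mem_support
        fun hcp => hdisj hcp q.start_mem_support
    have hw : s(dt.fst, dt.snd) ∈ w.bypass.edges := List.mem_map_of_mem hdt
    have hac := (mem_edges_iff_separates w.bypass_isPath).1 hw
    have hab := p.reachable_deleteEdges (f := s(dt.fst, dt.snd)) fun h =>
      hsnd (p.snd_mem_support_of_mem_edges h)
    have hcd := q.reachable_deleteEdges (f := s(dt.fst, dt.snd)) fun h =>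
      hdisj hfst (q.fst_mem_support_of_mem_edges h)
    exact ⟨_, mem_edges_of_mem_walk hw, separatesSets_pair_iff.2 ⟨hac,
      fun h => hac (h.trans hcd.symm), fun h => hac (hab.trans h),
      fun h => hac (hab.trans (h.trans hcd.symm))⟩⟩
  · rintro ⟨f, hf, hsep⟩
    obtain ⟨hac, had, hbc, -⟩ := separatesSets_pair_iff.1 hsep
    obtain ⟨p⟩ := reachable_deleteEdges_of_separates_of_separates hf (hV ha) (hV hb) (hV hc)
      hac hbc
    obtain ⟨q⟩ := reachable_deleteEdges_of_separates_of_separates hf (hV hc) (hV hd) (hV ha)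
      hac.symm had.symm
    have hle := fun {x y} (r : (T.graph.deleteEdges {f}).Walk x y) e (he : e ∈ r.edges) =>
      edgeSet_mono (deleteEdges_le _) (r.edges_subset_edgeSet he)
    refine ⟨p.bypass.transfer _ (hle _), q.bypass.transfer _ (hle _),
      p.bypass_isPath.transfer _, q.bypass_isPath.transfer _, fun x hxp hxq => ?_⟩
    rw [Walk.support_transfer] at hxp hxq
    exact hac (Reachable.trans ⟨p.bypass.takeUntil x hxp⟩ ⟨(q.bypass.takeUntil x hxq).reverse⟩)

/-- The paths `a - b` and `c - d` are disjoint, and `f` would lie on both. -/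
lemma DisplaysQuartet.not_separates_and_separates (h : T.DisplaysQuartet a b c d)
    (f : Sym2 ℕ) : ¬ (T.Separates f a b ∧ T.Separates f c d) := by
  obtain ⟨-, -, -, -, -, -, p, q, hp, hq, hdisj⟩ := h
  rintro ⟨hab, hcd⟩
  induction f using Sym2.ind with
  | _ u v =>
    exact hdisj (p.fst_mem_support_of_mem_edges ((mem_edges_iff_separates hp).2 hab))
      (q.fst_mem_support_of_mem_edges ((mem_edges_iff_separates hq).2 hcd))

lemma DisplaysQuartet.separatesSets_iff (h : T.DisplaysQuartet a b c d) {f : Sym2 ℕ} :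
    T.SeparatesSets f {a, b} {c, d} ↔ T.Separates f a c ∧ T.Separates f b d := by
  refine ⟨fun hs => ⟨hs a (by simp) c (by simp), hs b (by simp) d (by simp)⟩,
    fun ⟨hac, hbd⟩ => separatesSets_pair_iff.2 ?_⟩
  by_cases hab : T.Separates f a b
  · have hcd : (T.graph.deleteEdges {f}).Reachable c d :=
      not_not.1 fun hcd => h.not_separates_and_separates f ⟨hab, hcd⟩
    exact ⟨hac, fun had => hac (had.trans hcd.symm), fun hbc => hbd (hbc.trans hcd), hbd⟩
  · have hab := not_not.1 hab
    exact ⟨hac, fun had => hbd (hab.symm.trans had), fun hbc => hac (hab.trans hbc), hbd⟩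

lemma distinguishes_iff (h : T.DisplaysQuartet a b c d) {e : Sym2 ℕ} :
    Distinguishes T a b c d e ↔
      e ∈ T.edges ∧ ∀ f ∈ T.edges, T.SeparatesSets f {a, b} {c, d} ↔ f = e := by
  have key : ∀ {p : T.graph.Walk a c} {q : T.graph.Walk b d}, p.IsPath → q.IsPath → ∀ f,
      f ∈ p.edges.toFinset ∩ q.edges.toFinset ↔
        f ∈ T.edges ∧ T.SeparatesSets f {a, b} {c, d} := by
    intro p q hp hq f
    rw [Finset.mem_inter, List.mem_toFinset, List.mem_toFinset, h.separatesSets_iff,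
      mem_edges_iff_separates hp, mem_edges_iff_separates hq]
    exact ⟨fun hf => ⟨mem_edges_of_mem_walk ((mem_edges_iff_separates hp).2 hf.1), hf⟩,
      And.right⟩
  constructor
  · rintro ⟨-, p, q, hp, hq, hpq⟩
    have hf := fun f => (key hp hq f).symm.trans (by rw [hpq, Finset.mem_singleton])
    exact ⟨((hf e).2 rfl).1,
      fun f hf' => ⟨fun hs => (hf f).1 ⟨hf', hs⟩, fun hfe => ((hf f).2 hfe).2⟩⟩
  · rintro ⟨he, hsep⟩
    have ⟨ha, hb, hc, hd, _⟩ := h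
    obtain ⟨p⟩ := T.conn a (mem_verts_of_mem_leaves ha) c (mem_verts_of_mem_leaves hc)
    obtain ⟨q⟩ := T.conn b (mem_verts_of_mem_leaves hb) d (mem_verts_of_mem_leaves hd)
    refine ⟨h, p.bypass, q.bypass, p.bypass_isPath, q.bypass_isPath, Finset.ext fun f => ?_⟩
    rw [key p.bypass_isPath q.bypass_isPath, Finset.mem_singleton]
    exact ⟨fun ⟨hf, hs⟩ => (hsep f hf).1 hs, fun hfe => hfe ▸ ⟨he, (hsep e he).2 rfl⟩⟩

lemma DisplaysQuartet.union_eq_leaves {q : PhyloTree} (h4 : q.leaves.card = 4)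
    (h : q.DisplaysQuartet a b c d) : ({a, b} ∪ {c, d} : Finset ℕ) = q.leaves := by
  obtain ⟨ha, hb, hc, hd, hab, hcd, f, -, hf⟩ := displaysQuartet_iff.1 h
  refine Finset.eq_of_subset_of_card_le (by simp [Finset.insert_subset_iff, *]) ?_
  rw [h4, Finset.card_union_of_disjoint hf.disjoint, Finset.card_pair hab, Finset.card_pair hcd]

lemma DisplaysQuartet.sdiff_eq_leaves {q : PhyloTree} (h4 : q.leaves.card = 4)
    (h : q.DisplaysQuartet a b c d) :
    ({c, d} : Finset ℕ) = q.leaves \ {a, b} ∧ ({a, b} : Finset ℕ) = q.leaves \ {c, d} := by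
  obtain ⟨-, -, -, -, -, -, f, -, hf⟩ := displaysQuartet_iff.1 h
  rw [← h.union_eq_leaves h4, Finset.union_sdiff_left, Finset.union_sdiff_right,
    Finset.sdiff_eq_self_of_disjoint hf.disjoint.symm, Finset.sdiff_eq_self_of_disjoint hf.disjoint]
  exact ⟨rfl, rfl⟩

lemma DisplaysQuartet.splits_eq {q : PhyloTree} (h4 : q.leaves.card = 4) {a' b' c' d' : ℕ}
    (h : q.DisplaysQuartet a b c d) (h' : q.DisplaysQuartet a' b' c' d') :
    (({a, b} : Finset ℕ) = {a', b'} ∧ ({c, d} : Finset ℕ) = {c', d'}) ∨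
      (({a, b} : Finset ℕ) = {c', d'} ∧ ({c, d} : Finset ℕ) = {a', b'}) := by
  have pair_eq : ∀ {x y x' y' : ℕ}, x ≠ y → x' ≠ y' → ({x, y} : Finset ℕ) ⊆ {x', y'} →
      ({x, y} : Finset ℕ) = {x', y'} := fun hxy hxy' hsub =>
    Finset.eq_of_subset_of_card_le hsub (by rw [Finset.card_pair hxy, Finset.card_pair hxy'])
  have ⟨ha, hb, hc, hd, hab, hcd, _⟩ := h
  obtain ⟨-, -, -, -, hab', hcd', g, -, hg⟩ := displaysQuartet_iff.1 h'
  have side : ∀ {x y}, x ∈ q.leaves → y ∈ q.leaves →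
      (({x, y} : Finset ℕ) ⊆ {a', b'} ∨ ({x, y} : Finset ℕ) ⊆ {c', d'}) ∨
        q.Separates g x y := by
    intro x y hx hy
    rw [← h'.union_eq_leaves h4, Finset.mem_union] at hx hy
    rcases hx with hx | hx <;> rcases hy with hy | hy
    · exact .inl (.inl (Finset.insert_subset hx (Finset.singleton_subset_iff.2 hy)))
    · exact .inr (hg x hx y hy)
    · exact .inr (hg y hy x hx).symm
    · exact .inl (.inr (Finset.insert_subset hx (Finset.singleton_subset_iff.2 hy)))
  rcases side ha hb with (hA | hA) | hsab
  · have hA := pair_eq hab hab' hA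
    exact .inl ⟨hA, by rw [(h.sdiff_eq_leaves h4).1, (h'.sdiff_eq_leaves h4).1, hA]⟩
  · have hA := pair_eq hab hcd' hA
    exact .inr ⟨hA, by rw [(h.sdiff_eq_leaves h4).1, (h'.sdiff_eq_leaves h4).2, hA]⟩
  rcases side hc hd with (hC | hC) | hscd
  · have hC := pair_eq hcd hab' hC
    exact .inr ⟨by rw [(h.sdiff_eq_leaves h4).2, (h'.sdiff_eq_leaves h4).1, hC], hC⟩
  · have hC := pair_eq hcd hcd' hC
    exact .inl ⟨by rw [(h.sdiff_eq_leaves h4).2, (h'.sdiff_eq_leaves h4).2, hC], hC⟩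
  · exact (h.not_separates_and_separates g ⟨hsab, hscd⟩).elim

lemma _root_.QuartetDistinguishes.unique {q : PhyloTree} (h4 : q.leaves.card = 4)
    {e e' : Sym2 ℕ} (he : QuartetDistinguishes T q e) (he' : QuartetDistinguishes T q e') :
    e = e' := by
  obtain ⟨a, b, c, d, hq, hd⟩ := he
  obtain ⟨a', b', c', d', hq', hd'⟩ := he'
  obtain ⟨-, hsep⟩ := (distinguishes_iff hd.1).1 hd
  obtain ⟨he', hsep'⟩ := (distinguishes_iff hd'.1).1 hd'
  refine ((hsep e' he').1 ?_).symm
  rcases hq.splits_eq h4 hq' with ⟨hA, hC⟩ | ⟨hA, hC⟩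
  · rw [hA, hC]
    exact (hsep' e' he').2 rfl
  · rw [hA, hC]
    exact ((hsep' e' he').2 rfl).symm

lemma DisplaysQuartet.of_separates {T' : PhyloTree} (hL : T'.leaves = T.leaves)
    (h : T.DisplaysQuartet a b c d) {f f' : Sym2 ℕ} (hf : T.SeparatesSets f {a, b} {c, d})
    (hf' : f' ∈ T'.edges)
    (hff' : ∀ x ∈ T.leaves, ∀ y ∈ T.leaves, T.Separates f x y → T'.Separates f' x y) :
    T'.DisplaysQuartet a b c d := by
  obtain ⟨ha, hb, hc, hd, hab, hcd, -⟩ := displaysQuartet_iff.1 h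
  rw [displaysQuartet_iff, hL]
  refine ⟨ha, hb, hc, hd, hab, hcd, f', hf', fun x hx y hy => hff' x ?_ y ?_ (hf x hx y hy)⟩
  · rcases Finset.mem_insert.1 hx with rfl | hx
    exacts [ha, Finset.mem_singleton.1 hx ▸ hb]
  · rcases Finset.mem_insert.1 hy with rfl | hy
    exacts [hc, Finset.mem_singleton.1 hy ▸ hd]

end PhyloTree

def collapse (u v x : ℕ) : ℕ := if x = v then u else x

section Collapse

variable {u v : ℕ}

lemma collapse_of_ne {x : ℕ} (h : x ≠ v) : collapse u v x = x := if_neg h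

@[simp]
lemma collapse_self : collapse u v v = u := if_pos rfl

lemma collapse_eq_collapse {a b : ℕ} (h : collapse u v a = collapse u v b) :
    a = b ∨ s(a, b) = s(u, v) := by
  unfold collapse at h
  split_ifs at h <;> subst_vars <;> simp [Sym2.eq_swap]

lemma map_collapse_of_notMem {g : Sym2 ℕ} (hg : v ∉ g) : g.map (collapse u v) = g := by
  induction g using Sym2.ind with
  | _ a b =>
    rw [Sym2.mem_iff, not_or] at hg
    rw [Sym2.map_mk, collapse_of_ne (Ne.symm hg.1), collapse_of_ne (Ne.symm hg.2)]

end Collapse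

namespace PhyloTree

variable {T : PhyloTree} {u v : ℕ}

lemma three_le_degOf_of_mem_interiorEdges {e : Sym2 ℕ} (he : e ∈ T.interiorEdges) {x : ℕ}
    (hx : x ∈ e) : 3 ≤ degOf T.edges x := by
  obtain ⟨he, hint⟩ := Finset.mem_filter.1 he
  have h₁ := hint x hx
  have h₂ := T.no_deg_two x (T.edge_verts e he x hx)
  have h₀ := degOf_pos he hx
  omega

lemma ne_of_mem_leaves_of_three_le {x y : ℕ} (hx : x ∈ T.leaves) (hy : 3 ≤ degOf T.edges y) :
    x ≠ y := by
  rintro rfl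
  have := (Finset.mem_filter.1 hx).2
  omega

lemma not_triangle {x y z : ℕ} (hxy : s(x, y) ∈ T.edges) (hyz : s(y, z) ∈ T.edges)
    (hxz : s(x, z) ∈ T.edges) : False :=
  T.acyclic.cliqueFree le_rfl {x, y, z} (is3Clique_triple_iff.2
    ⟨⟨ne_of_mem_edges hxy, hxy⟩, ⟨ne_of_mem_edges hxz, hxz⟩, ⟨ne_of_mem_edges hyz, hyz⟩⟩)

def contractEdges (T : PhyloTree) (u v : ℕ) : Finset (Sym2 ℕ) :=
  (T.edges.erase s(u, v)).image (Sym2.map (collapse u v))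

lemma map_collapse_of_mem {g : Sym2 ℕ} (hg : g ∈ T.edges.erase s(u, v)) (hv : v ∈ g) :
    ∃ w, g = s(v, w) ∧ w ≠ u ∧ g.map (collapse u v) = s(u, w) := by
  obtain ⟨w, rfl⟩ := Sym2.mem_iff_exists.1 hv
  obtain ⟨hne, hg⟩ := Finset.mem_erase.1 hg
  have hwu : w ≠ u := by
    rintro rfl
    exact hne Sym2.eq_swap
  exact ⟨w, rfl, hwu, by rw [Sym2.map_mk, collapse_self, collapse_of_ne (ne_of_mem_edges hg).symm]⟩

/-- Two edges with the same image would form a triangle with `s(u, v)`. -/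
lemma injOn_map_collapse (he : s(u, v) ∈ T.edges) :
    Set.InjOn (Sym2.map (collapse u v)) (T.edges.erase s(u, v)) := by
  intro g hg g' hg' hgg'
  by_cases hv : v ∈ g <;> by_cases hv' : v ∈ g'
  · obtain ⟨w, rfl, -, hw⟩ := map_collapse_of_mem hg hv
    obtain ⟨w', rfl, hwu', hw'⟩ := map_collapse_of_mem hg' hv'
    rw [hw, hw'] at hgg'
    rcases Sym2.eq_iff.1 hgg' with ⟨-, rfl⟩ | ⟨rfl, -⟩
    · rfl
    · exact absurd rfl hwu'
  · obtain ⟨w, rfl, -, hw⟩ := map_collapse_of_mem hg hv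
    rw [hw, map_collapse_of_notMem hv'] at hgg'
    exact (not_triangle he (Finset.mem_of_mem_erase hg)
      (hgg' ▸ Finset.mem_of_mem_erase hg')).elim
  · obtain ⟨w, rfl, -, hw⟩ := map_collapse_of_mem hg' hv'
    rw [hw, map_collapse_of_notMem hv] at hgg'
    exact (not_triangle he (Finset.mem_of_mem_erase hg')
      (hgg' ▸ Finset.mem_of_mem_erase hg)).elim
  · rwa [map_collapse_of_notMem hv, map_collapse_of_notMem hv'] at hgg'

lemma card_contractEdges_add_one (he : s(u, v) ∈ T.edges) :
    (T.contractEdges u v).card + 1 = T.edges.card := by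
  rw [contractEdges, Finset.card_image_of_injOn (injOn_map_collapse he),
    Finset.card_erase_add_one he]

lemma mem_verts_erase_left (he : s(u, v) ∈ T.edges) : u ∈ T.verts.erase v :=
  Finset.mem_erase.2 ⟨ne_of_mem_edges he, T.edge_verts _ he u (Sym2.mem_mk_left _ _)⟩

lemma mem_verts_erase_of_mem_contractEdges (he : s(u, v) ∈ T.edges) {g : Sym2 ℕ}
    (hg : g ∈ T.contractEdges u v) {x : ℕ} (hx : x ∈ g) : x ∈ T.verts.erase v := by
  obtain ⟨g₀, hg₀, rfl⟩ := Finset.mem_image.1 hg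
  obtain ⟨y, hy, rfl⟩ := Sym2.mem_map.1 hx
  by_cases hyv : y = v
  · rw [hyv, collapse_self]
    exact mem_verts_erase_left he
  · rw [collapse_of_ne hyv]
    exact Finset.mem_erase.2 ⟨hyv, T.edge_verts _ (Finset.mem_of_mem_erase hg₀) y hy⟩

lemma not_isDiag_of_mem_contractEdges {g : Sym2 ℕ} (hg : g ∈ T.contractEdges u v) :
    ¬ g.IsDiag := by
  obtain ⟨g₀, hg₀, rfl⟩ := Finset.mem_image.1 hg
  obtain ⟨hne, hg₀⟩ := Finset.mem_erase.1 hg₀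
  induction g₀ using Sym2.ind with
  | _ a b =>
    rw [Sym2.map_mk, Sym2.mk_isDiag_iff]
    exact fun h => (collapse_eq_collapse h).elim (ne_of_mem_edges hg₀) hne

lemma reachable_contract (he : s(u, v) ∈ T.edges) {D : Set (Sym2 ℕ)}
    (hD : D ⊆ ↑(T.edges.erase s(u, v))) {x y : ℕ} (h : (T.graph.deleteEdges D).Reachable x y) :
    ((graphOfEdges (T.contractEdges u v)).deleteEdges (Sym2.map (collapse u v) '' D)).Reachable
      (collapse u v x) (collapse u v y) := by
  refine h.lift _ fun a b hab => ?_
  obtain ⟨⟨hab, habE⟩, habD⟩ := deleteEdges_adj.1 hab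
  by_cases hne : s(a, b) = s(u, v)
  · rcases Sym2.eq_iff.1 hne with ⟨rfl, rfl⟩ | ⟨rfl, rfl⟩
    · simp [collapse_of_ne hab]
    · simp [collapse_of_ne hab.symm]
  have hmem : s(a, b) ∈ T.edges.erase s(u, v) := Finset.mem_erase.2 ⟨hne, habE⟩
  refine Adj.reachable (deleteEdges_adj.2
    ⟨⟨fun h => (collapse_eq_collapse h).elim hab hne, ?_⟩, ?_⟩)
  · rw [← Sym2.map_mk]
    exact Finset.mem_image_of_mem _ hmem
  · rintro ⟨g, hg, hga⟩
    rw [← Sym2.map_mk] at hga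
    exact habD (injOn_map_collapse he (hD hg) hmem hga ▸ hg)

lemma reachable_contractEdges (he : s(u, v) ∈ T.edges) {x y : ℕ} (hx : x ∈ T.verts.erase v)
    (hy : y ∈ T.verts.erase v) : (graphOfEdges (T.contractEdges u v)).Reachable x y := by
  obtain ⟨hxv, hx⟩ := Finset.mem_erase.1 hx
  obtain ⟨hyv, hy⟩ := Finset.mem_erase.1 hy
  have := reachable_contract he (Set.empty_subset _) (x := x) (y := y)
    (by rw [deleteEdges_empty]; exact T.conn x hx y hy)
  rwa [Set.image_empty, deleteEdges_empty, collapse_of_ne hxv, collapse_of_ne hyv] at this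

lemma degOf_contractEdges_of_ne (he : s(u, v) ∈ T.edges) {x : ℕ} (hxu : x ≠ u) (hxv : x ≠ v) :
    degOf (T.contractEdges u v) x = degOf T.edges x := by
  have hmap : ∀ g : Sym2 ℕ, x ∈ g.map (collapse u v) ↔ x ∈ g := fun g => by
    rw [Sym2.mem_map]
    refine ⟨fun ⟨y, hy, hyx⟩ => ?_, fun hx => ⟨x, hx, collapse_of_ne hxv⟩⟩
    by_cases hyv : y = v
    · rw [hyv, collapse_self] at hyx
      exact absurd hyx.symm hxu
    · rw [collapse_of_ne hyv] at hyx
      exact hyx ▸ hy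
  rw [contractEdges, degOf_image (injOn_map_collapse he)]
  simp only [hmap]
  have := degOf_erase (x := x) he
  rwa [if_neg (by simp [hxu, hxv]), add_zero] at this

lemma degOf_contractEdges_self (he : s(u, v) ∈ T.edges) :
    degOf (T.contractEdges u v) u + 2 = degOf T.edges u + degOf T.edges v := by
  have huv := ne_of_mem_edges he
  have hmap : ∀ g : Sym2 ℕ, u ∈ g.map (collapse u v) ↔ u ∈ g ∨ v ∈ g := fun g => by
    rw [Sym2.mem_map]
    refine ⟨fun ⟨y, hy, hyu⟩ => ?_, ?_⟩
    · by_cases hyv : y = v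
      · exact .inr (hyv ▸ hy)
      · rw [collapse_of_ne hyv] at hyu
        exact .inl (hyu ▸ hy)
    · rintro (hu | hv)
      exacts [⟨u, hu, collapse_of_ne huv⟩, ⟨v, hv, collapse_self⟩]
  rw [contractEdges, degOf_image (injOn_map_collapse he)]
  simp only [hmap]
  rw [Finset.filter_or, Finset.card_union_of_disjoint]
  · have hu := degOf_erase (x := u) he
    have hv := degOf_erase (x := v) he
    simp only [Sym2.mem_mk_left, Sym2.mem_mk_right, if_true] at hu hv
    change degOf _ u + degOf _ v + 2 = _
    omega
  · refine Finset.disjoint_filter.2 fun g hg hu hv => (Finset.mem_erase.1 hg).1 ?_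
    exact (Sym2.mem_and_mem_iff huv).1 ⟨hu, hv⟩

def contract (T : PhyloTree) (u v : ℕ) (hi : s(u, v) ∈ T.interiorEdges) : PhyloTree where
  verts := T.verts.erase v
  edges := T.contractEdges u v
  edge_verts _ hg _ hx :=
    mem_verts_erase_of_mem_contractEdges (Finset.mem_of_mem_filter _ hi) hg hx
  not_diag _ := not_isDiag_of_mem_contractEdges
  conn _ hx _ hy := reachable_contractEdges (Finset.mem_of_mem_filter _ hi) hx hy
  acyclic := by
    have he := Finset.mem_of_mem_filter _ hi
    refine (isAcyclic_graphOfEdges_iff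
      (fun _ hg _ hx => mem_verts_erase_of_mem_contractEdges he hg hx)
      (fun _ => not_isDiag_of_mem_contractEdges) (fun _ hx _ hy => reachable_contractEdges he hx hy)
      ⟨u, mem_verts_erase_left he⟩).2 ?_
    have := card_contractEdges_add_one he
    have := T.card_edges_add_one
    have := Finset.card_erase_add_one (T.edge_verts _ he v (Sym2.mem_mk_right _ _))
    omega
  verts_nonempty := ⟨u, mem_verts_erase_left (Finset.mem_of_mem_filter _ hi)⟩
  no_deg_two x hx := by
    have he := Finset.mem_of_mem_filter _ hi
    obtain ⟨hxv, hx⟩ := Finset.mem_erase.1 hx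
    change degOf (T.contractEdges u v) x ≠ 2
    by_cases hxu : x = u
    · have := degOf_contractEdges_self he
      have := three_le_degOf_of_mem_interiorEdges hi (Sym2.mem_mk_left u v)
      have := three_le_degOf_of_mem_interiorEdges hi (Sym2.mem_mk_right u v)
      rw [hxu]
      omega
    · rw [degOf_contractEdges_of_ne he hxu hxv]
      exact T.no_deg_two x hx

variable (hi : s(u, v) ∈ T.interiorEdges)

lemma card_verts_contract_add_one : (T.contract u v hi).verts.card + 1 = T.verts.card :=
  Finset.card_erase_add_one
    (T.edge_verts _ (Finset.mem_of_mem_filter _ hi) v (Sym2.mem_mk_right _ _))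

lemma leaves_contract : (T.contract u v hi).leaves = T.leaves := by
  have he := Finset.mem_of_mem_filter _ hi
  have hu := three_le_degOf_of_mem_interiorEdges hi (Sym2.mem_mk_left u v)
  have hv := three_le_degOf_of_mem_interiorEdges hi (Sym2.mem_mk_right u v)
  ext x
  rw [leaves, leaves, Finset.mem_filter, Finset.mem_filter]
  change x ∈ T.verts.erase v ∧ degOf (T.contractEdges u v) x = 1 ↔ _
  rw [Finset.mem_erase]
  by_cases hxv : x = v
  · subst hxv
    omega
  by_cases hxu : x = u
  · subst hxu
    have := degOf_contractEdges_self he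
    omega
  · rw [degOf_contractEdges_of_ne he hxu hxv]
    tauto

lemma Separates.contract {f : Sym2 ℕ} (hf : f ∈ T.edges.erase s(u, v)) {x y : ℕ}
    (hx : x ∈ T.verts) (hy : y ∈ T.verts) (h : T.Separates f x y) :
    (T.contract u v hi).Separates (f.map (collapse u v)) (collapse u v x) (collapse u v y) := by
  have he := Finset.mem_of_mem_filter _ hi
  induction f using Sym2.ind with
  | _ p q =>
    refine Separates.map _ (Finset.mem_of_mem_erase hf) (fun a b hab => ?_) ?_ hx hy h
    · have := reachable_contract he (Set.singleton_subset_iff.2 hf) hab.reachable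
      rwa [Set.image_singleton] at this
    · rw [Sym2.map_mk]
      exact separates_of_mem_edges (Sym2.map_mk .. ▸ Finset.mem_image_of_mem _ hf)

lemma DisplaysQuartet.contract {a b c d : ℕ} (h : T.DisplaysQuartet a b c d)
    (hnd : ¬ Distinguishes T a b c d s(u, v)) : (T.contract u v hi).DisplaysQuartet a b c d := by
  have he := Finset.mem_of_mem_filter _ hi
  obtain ⟨-, -, -, -, -, -, f₀, hf₀, hs₀⟩ := displaysQuartet_iff.1 h
  obtain ⟨f, hf, hs⟩ : ∃ f ∈ T.edges.erase s(u, v), T.SeparatesSets f {a, b} {c, d} := by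
    by_cases hf₀e : f₀ = s(u, v)
    · subst hf₀e
      by_contra hcon
      refine hnd ((distinguishes_iff h).2 ⟨he, fun f hf => ⟨fun hs => ?_, fun hfe => hfe ▸ hs₀⟩⟩)
      exact by_contra fun hne => hcon ⟨f, Finset.mem_erase.2 ⟨hne, hf⟩, hs⟩
    · exact ⟨f₀, Finset.mem_erase.2 ⟨hf₀e, hf₀⟩, hs₀⟩
  have hv := three_le_degOf_of_mem_interiorEdges hi (Sym2.mem_mk_right u v)
  refine h.of_separates (leaves_contract hi) hs (Finset.mem_image_of_mem _ hf)
    fun x hx y hy hxy => ?_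
  have := Separates.contract hi hf (mem_verts_of_mem_leaves hx) (mem_verts_of_mem_leaves hy) hxy
  rwa [collapse_of_ne (ne_of_mem_leaves_of_three_le hx hv),
    collapse_of_ne (ne_of_mem_leaves_of_three_le hy hv)] at this

end PhyloTree

namespace PhyloTree

structure Resolvable (T : PhyloTree) (w n₁ n₂ w' : ℕ) : Prop where
  mem_edges₁ : s(w, n₁) ∈ T.edges
  mem_edges₂ : s(w, n₂) ∈ T.edges
  ne : n₁ ≠ n₂
  fresh : w' ∉ T.verts
  four_le_degOf : 4 ≤ degOf T.edges w

def resolveEdges (T : PhyloTree) (w n₁ n₂ w' : ℕ) : Finset (Sym2 ℕ) :=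
  insert s(w, w') (insert s(w', n₁) (insert s(w', n₂) ((T.edges.erase s(w, n₁)).erase s(w, n₂))))

variable {T : PhyloTree} {w n₁ n₂ w' : ℕ}

lemma mem_resolveEdges {g : Sym2 ℕ} :
    g ∈ T.resolveEdges w n₁ n₂ w' ↔ g = s(w, w') ∨ g = s(w', n₁) ∨ g = s(w', n₂) ∨
      (g ∈ T.edges ∧ g ≠ s(w, n₁) ∧ g ≠ s(w, n₂)) := by
  simp only [resolveEdges, Finset.mem_insert, Finset.mem_erase]
  tauto

namespace Resolvable

lemma fresh_notMem_of_mem_edges (R : T.Resolvable w n₁ n₂ w') {g : Sym2 ℕ} (hg : g ∈ T.edges) :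
    w' ∉ g :=
  fun h => R.fresh (T.edge_verts g hg w' h)

lemma fresh_ne_w (R : T.Resolvable w n₁ n₂ w') : w' ≠ w :=
  fun h => R.fresh_notMem_of_mem_edges R.mem_edges₁ (h ▸ Sym2.mem_mk_left _ _)

lemma fresh_ne_n₁ (R : T.Resolvable w n₁ n₂ w') : w' ≠ n₁ :=
  fun h => R.fresh_notMem_of_mem_edges R.mem_edges₁ (h ▸ Sym2.mem_mk_right _ _)

lemma fresh_ne_n₂ (R : T.Resolvable w n₁ n₂ w') : w' ≠ n₂ :=
  fun h => R.fresh_notMem_of_mem_edges R.mem_edges₂ (h ▸ Sym2.mem_mk_right _ _)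

lemma mem_erase_edges₂ (R : T.Resolvable w n₁ n₂ w') : s(w, n₂) ∈ T.edges.erase s(w, n₁) :=
  Finset.mem_erase.2 ⟨fun h => R.ne (Sym2.congr_right.1 h).symm, R.mem_edges₂⟩

lemma notMem_insert (R : T.Resolvable w n₁ n₂ w') :
    s(w, w') ∉ insert s(w', n₁) (insert s(w', n₂) ((T.edges.erase s(w, n₁)).erase s(w, n₂))) ∧
      s(w', n₁) ∉ insert s(w', n₂) ((T.edges.erase s(w, n₁)).erase s(w, n₂)) ∧
      s(w', n₂) ∉ (T.edges.erase s(w, n₁)).erase s(w, n₂) := by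
  have hold : ∀ {g}, g ∈ (T.edges.erase s(w, n₁)).erase s(w, n₂) → w' ∉ g := fun hg =>
    R.fresh_notMem_of_mem_edges (Finset.mem_of_mem_erase (Finset.mem_of_mem_erase hg))
  have := ne_of_mem_edges R.mem_edges₁
  have := ne_of_mem_edges R.mem_edges₂
  have := R.ne
  have := R.fresh_ne_w
  simp only [Finset.mem_insert, not_or, Sym2.eq_iff]
  exact ⟨⟨by omega, by omega, fun h => hold h (Sym2.mem_mk_right _ _)⟩,
    ⟨by omega, fun h => hold h (Sym2.mem_mk_left _ _)⟩, fun h => hold h (Sym2.mem_mk_left _ _)⟩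

lemma card_resolveEdges (R : T.Resolvable w n₁ n₂ w') :
    (T.resolveEdges w n₁ n₂ w').card = T.edges.card + 1 := by
  obtain ⟨h₁, h₂, h₃⟩ := R.notMem_insert
  rw [resolveEdges, Finset.card_insert_of_notMem h₁, Finset.card_insert_of_notMem h₂,
    Finset.card_insert_of_notMem h₃, ← Finset.card_erase_add_one R.mem_edges₁,
    ← Finset.card_erase_add_one R.mem_erase_edges₂]

lemma degOf_resolveEdges (R : T.Resolvable w n₁ n₂ w') (x : ℕ) :
    degOf (T.resolveEdges w n₁ n₂ w') x + (if x ∈ s(w, n₁) then 1 else 0) +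
      (if x ∈ s(w, n₂) then 1 else 0) = degOf T.edges x + (if x ∈ s(w, w') then 1 else 0) +
      (if x ∈ s(w', n₁) then 1 else 0) + (if x ∈ s(w', n₂) then 1 else 0) := by
  obtain ⟨h₁, h₂, h₃⟩ := R.notMem_insert
  have e₁ := degOf_erase (x := x) R.mem_edges₁
  have e₂ := degOf_erase (x := x) R.mem_erase_edges₂
  rw [resolveEdges, degOf_insert h₁, degOf_insert h₂, degOf_insert h₃]
  omega

lemma degOf_resolveEdges_fresh (R : T.Resolvable w n₁ n₂ w') :
    degOf (T.resolveEdges w n₁ n₂ w') w' = 3 := by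
  have h := R.degOf_resolveEdges w'
  have h₀ : degOf T.edges w' = 0 := Finset.card_eq_zero.2
    (Finset.filter_eq_empty_iff.2 fun _ hg => R.fresh_notMem_of_mem_edges hg)
  simp only [Sym2.mem_iff, R.fresh_ne_w, R.fresh_ne_n₁, R.fresh_ne_n₂, or_self, or_true,
    or_false, ↓reduceIte, add_zero] at h
  omega

lemma degOf_resolveEdges_self (R : T.Resolvable w n₁ n₂ w') :
    degOf (T.resolveEdges w n₁ n₂ w') w + 1 = degOf T.edges w := by
  have h := R.degOf_resolveEdges w
  simp only [Sym2.mem_iff, R.fresh_ne_w.symm, ne_of_mem_edges R.mem_edges₁,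
    ne_of_mem_edges R.mem_edges₂, or_self, or_false, ↓reduceIte, add_zero] at h
  omega

lemma degOf_resolveEdges_of_ne (R : T.Resolvable w n₁ n₂ w') {x : ℕ} (hxw : x ≠ w)
    (hxw' : x ≠ w') : degOf (T.resolveEdges w n₁ n₂ w') x = degOf T.edges x := by
  simpa only [Sym2.mem_iff, hxw, hxw', false_or, or_self, ↓reduceIte, add_zero,
    Nat.add_right_cancel_iff] using R.degOf_resolveEdges x

/-- The edge `s(w, nᵢ)` is replaced by the path `w - w' - nᵢ`. -/
lemma reachable_resolve (R : T.Resolvable w n₁ n₂ w') {D D' : Set (Sym2 ℕ)}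
    (hww' : s(w, w') ∉ D') (h₁ : s(w, n₁) ∉ D → s(w', n₁) ∉ D')
    (h₂ : s(w, n₂) ∉ D → s(w', n₂) ∉ D')
    (hold : ∀ g ∈ T.edges, g ≠ s(w, n₁) → g ≠ s(w, n₂) → g ∉ D → g ∉ D') {x y : ℕ}
    (h : (T.graph.deleteEdges D).Reachable x y) :
    ((graphOfEdges (T.resolveEdges w n₁ n₂ w')).deleteEdges D').Reachable x y := by
  have via : ∀ n, s(w, n) ∈ T.edges → s(w', n) ∈ T.resolveEdges w n₁ n₂ w' → s(w', n) ∉ D' →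
      ((graphOfEdges (T.resolveEdges w n₁ n₂ w')).deleteEdges D').Reachable w n := by
    intro n hn hmem hD
    have hw'n : w' ≠ n := fun h => R.fresh_notMem_of_mem_edges hn (h ▸ Sym2.mem_mk_right _ _)
    have hww'_adj : ((graphOfEdges (T.resolveEdges w n₁ n₂ w')).deleteEdges D').Adj w w' :=
      deleteEdges_adj.2 ⟨⟨R.fresh_ne_w.symm, mem_resolveEdges.2 (.inl rfl)⟩, hww'⟩
    exact hww'_adj.reachable.trans (Adj.reachable (deleteEdges_adj.2 ⟨⟨hw'n, hmem⟩, hD⟩))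
  refine h.lift id fun a b hab => ?_
  obtain ⟨⟨hab, habE⟩, habD⟩ := deleteEdges_adj.1 hab
  by_cases hab₁ : s(a, b) = s(w, n₁)
  · have := via n₁ R.mem_edges₁ (mem_resolveEdges.2 (.inr (.inl rfl))) (h₁ (hab₁ ▸ habD))
    rcases Sym2.eq_iff.1 hab₁ with ⟨rfl, rfl⟩ | ⟨rfl, rfl⟩
    exacts [this, this.symm]
  by_cases hab₂ : s(a, b) = s(w, n₂)
  · have := via n₂ R.mem_edges₂ (mem_resolveEdges.2 (.inr (.inr (.inl rfl)))) (h₂ (hab₂ ▸ habD))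
    rcases Sym2.eq_iff.1 hab₂ with ⟨rfl, rfl⟩ | ⟨rfl, rfl⟩
    exacts [this, this.symm]
  exact Adj.reachable (deleteEdges_adj.2 ⟨⟨hab,
    mem_resolveEdges.2 (.inr (.inr (.inr ⟨habE, hab₁, hab₂⟩)))⟩, hold _ habE hab₁ hab₂ habD⟩)

lemma mem_insert_verts_of_mem_resolveEdges (R : T.Resolvable w n₁ n₂ w') {g : Sym2 ℕ}
    (hg : g ∈ T.resolveEdges w n₁ n₂ w') {x : ℕ} (hx : x ∈ g) : x ∈ insert w' T.verts := by
  have hw := T.edge_verts _ R.mem_edges₁ w (Sym2.mem_mk_left _ _)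
  have hn₁ := T.edge_verts _ R.mem_edges₁ n₁ (Sym2.mem_mk_right _ _)
  have hn₂ := T.edge_verts _ R.mem_edges₂ n₂ (Sym2.mem_mk_right _ _)
  rcases mem_resolveEdges.1 hg with rfl | rfl | rfl | ⟨hg, -⟩ <;>
    [skip; skip; skip; exact Finset.mem_insert_of_mem (T.edge_verts _ hg x hx)] <;>
    rcases Sym2.mem_iff.1 hx with rfl | rfl <;> simp [*]

lemma not_isDiag_of_mem_resolveEdges (R : T.Resolvable w n₁ n₂ w') {g : Sym2 ℕ}
    (hg : g ∈ T.resolveEdges w n₁ n₂ w') : ¬ g.IsDiag := by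
  rcases mem_resolveEdges.1 hg with rfl | rfl | rfl | ⟨hg, -⟩
  · exact fun h => R.fresh_ne_w (Sym2.mk_isDiag_iff.1 h).symm
  · exact fun h => R.fresh_ne_n₁ (Sym2.mk_isDiag_iff.1 h)
  · exact fun h => R.fresh_ne_n₂ (Sym2.mk_isDiag_iff.1 h)
  · exact T.not_diag g hg

lemma reachable_resolveEdges (R : T.Resolvable w n₁ n₂ w') {x y : ℕ}
    (hx : x ∈ insert w' T.verts) (hy : y ∈ insert w' T.verts) :
    (graphOfEdges (T.resolveEdges w n₁ n₂ w')).Reachable x y := by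
  have hw := T.edge_verts _ R.mem_edges₁ w (Sym2.mem_mk_left _ _)
  have to_w : ∀ z ∈ insert w' T.verts,
      (graphOfEdges (T.resolveEdges w n₁ n₂ w')).Reachable z w := by
    intro z hz
    rcases Finset.mem_insert.1 hz with rfl | hz
    · exact Adj.reachable ⟨R.fresh_ne_w, Sym2.eq_swap ▸ mem_resolveEdges.2 (.inl rfl)⟩
    · have := R.reachable_resolve (D := ∅) (D' := ∅) (by simp) (by simp) (by simp) (by simp)
        (x := z) (y := w) (by rw [deleteEdges_empty]; exact T.conn z hz w hw)
      rwa [deleteEdges_empty] at this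
  exact (to_w x hx).trans (to_w y hy).symm

end Resolvable

def resolve (T : PhyloTree) (w n₁ n₂ w' : ℕ) (R : T.Resolvable w n₁ n₂ w') : PhyloTree where
  verts := insert w' T.verts
  edges := T.resolveEdges w n₁ n₂ w'
  edge_verts _ hg _ hx := R.mem_insert_verts_of_mem_resolveEdges hg hx
  not_diag _ := R.not_isDiag_of_mem_resolveEdges
  conn _ hx _ hy := R.reachable_resolveEdges hx hy
  acyclic := by
    refine (isAcyclic_graphOfEdges_iff
      (fun _ hg _ hx => R.mem_insert_verts_of_mem_resolveEdges hg hx)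
      (fun _ => R.not_isDiag_of_mem_resolveEdges) (fun _ hx _ hy => R.reachable_resolveEdges hx hy)
      ⟨w', Finset.mem_insert_self _ _⟩).2 ?_
    rw [R.card_resolveEdges, Finset.card_insert_of_notMem R.fresh, T.card_edges_add_one]
  verts_nonempty := ⟨w', Finset.mem_insert_self _ _⟩
  no_deg_two x hx := by
    by_cases hxw' : x = w'
    · rw [hxw', R.degOf_resolveEdges_fresh]
      omega
    by_cases hxw : x = w
    · have := R.degOf_resolveEdges_self
      have := R.four_le_degOf
      rw [hxw]
      omega
    · rw [R.degOf_resolveEdges_of_ne hxw hxw']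
      exact T.no_deg_two x ((Finset.mem_insert.1 hx).resolve_left hxw')

namespace Resolvable

lemma card_verts_resolve (R : T.Resolvable w n₁ n₂ w') :
    (T.resolve w n₁ n₂ w' R).verts.card = T.verts.card + 1 :=
  Finset.card_insert_of_notMem R.fresh

lemma leaves_resolve (R : T.Resolvable w n₁ n₂ w') :
    (T.resolve w n₁ n₂ w' R).leaves = T.leaves := by
  ext x
  rw [leaves, leaves, Finset.mem_filter, Finset.mem_filter]
  change x ∈ insert w' T.verts ∧ degOf (T.resolveEdges w n₁ n₂ w') x = 1 ↔ _
  by_cases hxw' : x = w'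
  · rw [hxw', R.degOf_resolveEdges_fresh]
    exact iff_of_false (by omega) fun h => R.fresh h.1
  by_cases hxw : x = w
  · have := R.degOf_resolveEdges_self
    have := R.four_le_degOf
    rw [hxw]
    omega
  · rw [R.degOf_resolveEdges_of_ne hxw hxw', Finset.mem_insert, or_iff_right hxw']

lemma separates_resolve_of_eq (R : T.Resolvable w n₁ n₂ w') {n : ℕ} (hn : n = n₁ ∨ n = n₂)
    {x y : ℕ} (hx : x ∈ T.verts) (hy : y ∈ T.verts) (h : T.Separates s(w, n) x y) :
    (T.resolve w n₁ n₂ w' R).Separates s(w', n) x y := by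
  have hf : s(w, n) ∈ T.edges := by
    rcases hn with rfl | rfl
    exacts [R.mem_edges₁, R.mem_edges₂]
  have hmem : s(w', n) ∈ T.resolveEdges w n₁ n₂ w' := by
    rcases hn with rfl | rfl
    exacts [mem_resolveEdges.2 (.inr (.inl rfl)), mem_resolveEdges.2 (.inr (.inr (.inl rfl)))]
  have hww' : s(w, w') ≠ s(w', n) := fun h => by
    rcases Sym2.eq_iff.1 h with ⟨h, -⟩ | ⟨h, -⟩
    exacts [R.fresh_ne_w h.symm, ne_of_mem_edges hf h]
  refine Separates.map id hf (fun a b hab => ?_) ?_ hx hy h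
  · refine R.reachable_resolve (by simpa using hww') ?_ ?_ ?_ hab.reachable
    · simp only [Set.mem_singleton_iff]
      exact fun hn₁ h => hn₁ (by rw [Sym2.congr_right.1 h])
    · simp only [Set.mem_singleton_iff]
      exact fun hn₂ h => hn₂ (by rw [Sym2.congr_right.1 h])
    · simp only [Set.mem_singleton_iff]
      exact fun g hg _ _ _ h => R.fresh_notMem_of_mem_edges hg (h ▸ Sym2.mem_mk_left _ _)
  · have hadj : ((T.resolve w n₁ n₂ w' R).graph.deleteEdges {s(w', n)}).Adj w w' :=
      deleteEdges_adj.2 ⟨⟨R.fresh_ne_w.symm, mem_resolveEdges.2 (.inl rfl)⟩, hww'⟩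
    exact fun hr => separates_of_mem_edges hmem (hadj.reachable.symm.trans hr)

lemma separates_resolve_of_ne (R : T.Resolvable w n₁ n₂ w') {f : Sym2 ℕ} (hf : f ∈ T.edges)
    (hf₁ : f ≠ s(w, n₁)) (hf₂ : f ≠ s(w, n₂)) {x y : ℕ} (hx : x ∈ T.verts) (hy : y ∈ T.verts)
    (h : T.Separates f x y) : (T.resolve w n₁ n₂ w' R).Separates f x y := by
  have hnew : ∀ {g}, w' ∈ g → g ∉ ({f} : Set (Sym2 ℕ)) := fun hg h =>
    R.fresh_notMem_of_mem_edges hf (Set.mem_singleton_iff.1 h ▸ hg)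
  induction f using Sym2.ind with
  | _ p q =>
    refine Separates.map (T' := T.resolve w n₁ n₂ w' R) id hf (fun a b hab =>
      R.reachable_resolve (hnew (Sym2.mem_mk_right _ _)) (fun _ => hnew (Sym2.mem_mk_left _ _))
        (fun _ => hnew (Sym2.mem_mk_left _ _)) (fun _ _ _ _ => id) hab.reachable)
      (separates_of_mem_edges (mem_resolveEdges.2 (.inr (.inr (.inr ⟨hf, hf₁, hf₂⟩))))) hx hy h

lemma exists_separates_resolve (R : T.Resolvable w n₁ n₂ w') {f : Sym2 ℕ} (hf : f ∈ T.edges) :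
    ∃ f' ∈ T.resolveEdges w n₁ n₂ w', ∀ x ∈ T.verts, ∀ y ∈ T.verts,
      T.Separates f x y → (T.resolve w n₁ n₂ w' R).Separates f' x y := by
  by_cases hf₁ : f = s(w, n₁)
  · exact ⟨_, mem_resolveEdges.2 (.inr (.inl rfl)),
      fun x hx y hy h => R.separates_resolve_of_eq (.inl rfl) hx hy (hf₁ ▸ h)⟩
  by_cases hf₂ : f = s(w, n₂)
  · exact ⟨_, mem_resolveEdges.2 (.inr (.inr (.inl rfl))),
      fun x hx y hy h => R.separates_resolve_of_eq (.inr rfl) hx hy (hf₂ ▸ h)⟩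
  exact ⟨f, mem_resolveEdges.2 (.inr (.inr (.inr ⟨hf, hf₁, hf₂⟩))),
    fun x hx y hy => R.separates_resolve_of_ne hf hf₁ hf₂ hx hy⟩

end Resolvable

lemma DisplaysQuartet.resolve (R : T.Resolvable w n₁ n₂ w') {a b c d : ℕ}
    (h : T.DisplaysQuartet a b c d) : (T.resolve w n₁ n₂ w' R).DisplaysQuartet a b c d := by
  obtain ⟨-, -, -, -, -, -, f, hf, hs⟩ := displaysQuartet_iff.1 h
  obtain ⟨f', hf', hff'⟩ := R.exists_separates_resolve hf
  exact h.of_separates R.leaves_resolve hs hf' fun x hx y hy =>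
    hff' x (mem_verts_of_mem_leaves hx) y (mem_verts_of_mem_leaves hy)

lemma exists_resolvable (hT : ¬ T.IsBinary) (hV : 2 ≤ T.verts.card) :
    ∃ w n₁ n₂ w', T.Resolvable w n₁ n₂ w' := by
  obtain ⟨w, hw, hw₁, hw₃⟩ : ∃ w ∈ T.verts, degOf T.edges w ≠ 1 ∧ degOf T.edges w ≠ 3 := by
    simpa [IsBinary] using hT
  obtain ⟨y, hy, hyw⟩ := Finset.exists_mem_ne hV w
  obtain ⟨p⟩ := T.conn w hw y hy
  have hpos := degOf_pos (p.adj_snd (Walk.not_nil_of_ne hyw.symm)).2 (Sym2.mem_mk_left _ _)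
  have h₄ : 4 ≤ degOf T.edges w := by
    have := T.no_deg_two w hw
    omega
  obtain ⟨g₁, hg₁, g₂, hg₂, hne⟩ := Finset.one_lt_card.1 (show 1 < degOf T.edges w by omega)
  obtain ⟨hg₁, hwg₁⟩ := Finset.mem_filter.1 hg₁
  obtain ⟨hg₂, hwg₂⟩ := Finset.mem_filter.1 hg₂
  obtain ⟨n₁, rfl⟩ := Sym2.mem_iff_exists.1 hwg₁
  obtain ⟨n₂, rfl⟩ := Sym2.mem_iff_exists.1 hwg₂
  obtain ⟨w', hw'⟩ := Infinite.exists_notMem_finset T.verts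
  exact ⟨w, n₁, n₂, w', hg₁, hg₂, fun h => hne (h ▸ rfl), hw', h₄⟩

lemma sum_degOf : ∑ v ∈ T.verts, degOf T.edges v = 2 * T.edges.card := by
  have hcount := Finset.sum_card_bipartiteAbove_eq_sum_card_bipartiteBelow
    (s := T.verts) (t := T.edges) (r := fun v g => v ∈ g)
  have hends : ∀ g ∈ T.edges, (Finset.bipartiteBelow (fun v g => v ∈ g) T.verts g).card = 2 := by
    intro g hg
    rw [← Sym2.card_toFinset_of_not_isDiag g (T.not_diag g hg)]
    congr 1
    ext x
    simpa [Finset.bipartiteBelow] using fun hx => T.edge_verts g hg x hx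
  rw [Finset.sum_congr rfl hends, Finset.sum_const, smul_eq_mul, mul_comm] at hcount
  exact hcount

lemma eq_of_degOf_eq_one {x : ℕ} (hx : degOf T.edges x = 1) {g g' : Sym2 ℕ} (hg : g ∈ T.edges)
    (hxg : x ∈ g) (hg' : g' ∈ T.edges) (hxg' : x ∈ g') : g = g' :=
  Finset.card_le_one.1 hx.le g (Finset.mem_filter.2 ⟨hg, hxg⟩) g' (Finset.mem_filter.2 ⟨hg', hxg'⟩)

/-- Such an edge would be a whole connected component. -/
lemma notMem_edges_of_mem_leaves (hV : 3 ≤ T.verts.card) {a b : ℕ} (ha : a ∈ T.leaves)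
    (hb : b ∈ T.leaves) : s(a, b) ∉ T.edges := by
  intro hab
  have hclosed : ∀ x, T.graph.Reachable a x → x ∈ ({a, b} : Finset ℕ) := by
    intro x hx
    rw [reachable_iff_reflTransGen] at hx
    induction hx with
    | refl => simp
    | @tail y z _ hyz ih =>
      have hyz' : s(y, z) = s(a, b) := by
        rcases Finset.mem_insert.1 ih with rfl | hy
        · exact eq_of_degOf_eq_one (Finset.mem_filter.1 ha).2 hyz.2 (Sym2.mem_mk_left _ _) hab
            (Sym2.mem_mk_left _ _)
        · rw [Finset.mem_singleton.1 hy] at hyz ⊢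
          exact eq_of_degOf_eq_one (Finset.mem_filter.1 hb).2 hyz.2 (Sym2.mem_mk_left _ _) hab
            (Sym2.mem_mk_right _ _)
      have := hyz' ▸ Sym2.mem_mk_right y z
      simpa using this
  have hsub : T.verts ⊆ {a, b} := fun x hx =>
    hclosed x (T.conn a (mem_verts_of_mem_leaves ha) x hx)
  have := (Finset.card_le_card hsub).trans Finset.card_le_two
  omega

lemma card_interiorEdges_add_card_leaves (hV : 3 ≤ T.verts.card) :
    T.interiorEdges.card + T.leaves.card = T.edges.card := by
  -- each leaf lies on one edge, and each edge with a leaf end has exactly one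
  have hcount := Finset.sum_card_bipartiteAbove_eq_sum_card_bipartiteBelow
    (s := T.leaves) (t := T.edges) (r := fun v g => v ∈ g)
  have hleaf : ∀ x ∈ T.leaves, (Finset.bipartiteAbove (fun v g => v ∈ g) T.edges x).card = 1 :=
    fun x hx => (Finset.mem_filter.1 hx).2
  have hint : ∀ g ∈ T.edges.filter fun g => ∀ x ∈ g, degOf T.edges x ≠ 1,
      (Finset.bipartiteBelow (fun v g => v ∈ g) T.leaves g).card = 0 := by
    intro g hg
    refine Finset.card_eq_zero.2 (Finset.filter_eq_empty_iff.2 fun x hx hxg => ?_)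
    exact (Finset.mem_filter.1 hg).2 x hxg (Finset.mem_filter.1 hx).2
  have hpend : ∀ g ∈ T.edges.filter fun g => ¬ ∀ x ∈ g, degOf T.edges x ≠ 1,
      (Finset.bipartiteBelow (fun v g => v ∈ g) T.leaves g).card = 1 := by
    intro g hg
    obtain ⟨hg, hx⟩ := Finset.mem_filter.1 hg
    obtain ⟨x, hxg, hx⟩ : ∃ x ∈ g, degOf T.edges x = 1 := by simpa using hx
    refine le_antisymm (Finset.card_le_one.2 fun y hy z hz => by_contra fun hyz => ?_)
      (Finset.card_pos.2 ⟨x, Finset.mem_filter.2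
        ⟨Finset.mem_filter.2 ⟨T.edge_verts g hg x hxg, hx⟩, hxg⟩⟩)
    obtain ⟨hy, hyg⟩ := Finset.mem_filter.1 hy
    obtain ⟨hz, hzg⟩ := Finset.mem_filter.1 hz
    exact notMem_edges_of_mem_leaves hV hy hz ((Sym2.mem_and_mem_iff hyz).1 ⟨hyg, hzg⟩ ▸ hg)
  rw [Finset.sum_congr rfl hleaf, ← Finset.sum_filter_add_sum_filter_not T.edges
    (fun g => ∀ x ∈ g, degOf T.edges x ≠ 1), Finset.sum_congr rfl hint,
    Finset.sum_congr rfl hpend] at hcount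
  simp only [Finset.sum_const, smul_eq_mul, mul_one, mul_zero, zero_add] at hcount
  rw [interiorEdges, hcount]
  exact Finset.card_filter_add_card_filter_not _

lemma card_interiorEdges_add_three (hT : T.IsBinary) (hV : 3 ≤ T.verts.card) :
    T.interiorEdges.card + 3 = T.leaves.card := by
  have hpart : T.leaves.card + T.interiorVerts.card = T.verts.card :=
    Finset.card_filter_add_card_filter_not _
  have hdeg : ∑ v ∈ T.verts, degOf T.edges v = T.leaves.card + 3 * T.interiorVerts.card := by
    rw [← Finset.sum_filter_add_sum_filter_not _ (fun v => degOf T.edges v = 1)]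
    rw [Finset.sum_congr rfl fun v hv => (Finset.mem_filter.1 hv).2,
      Finset.sum_congr rfl fun v hv => hT v (Finset.mem_filter.1 hv).1 (Finset.mem_filter.1 hv).2]
    simp [leaves, interiorVerts, mul_comm]
  have := T.sum_degOf
  have := T.card_edges_add_one
  have := card_interiorEdges_add_card_leaves hV
  omega

end PhyloTree

namespace Defines

variable {Q : Finset PhyloTree} {T : PhyloTree}

lemma card_verts_eq (hdef : Defines Q T) {T' : PhyloTree} (hL : T'.leaves = T.leaves)
    (hdisp : ∀ q ∈ Q, ∀ a b c d, q.DisplaysQuartet a b c d → T'.DisplaysQuartet a b c d) :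
    T'.verts.card = T.verts.card := by
  obtain ⟨hQ, hT, huniq⟩ := hdef
  obtain ⟨-, φ, hφ, -, -⟩ := huniq T' (hL.trans hQ) fun q hq => ⟨hL ▸ (hT q hq).1, hdisp q hq⟩
  exact Finset.card_nbij φ hφ.mapsTo hφ.injOn hφ.surjOn

lemma isBinary (hdef : Defines Q T) (hV : 2 ≤ T.verts.card) : T.IsBinary := by
  by_contra hT
  obtain ⟨w, n₁, n₂, w', R⟩ := PhyloTree.exists_resolvable hT hV
  have := hdef.card_verts_eq R.leaves_resolve fun q hq a b c d h =>
    ((hdef.2.1 q hq).2 a b c d h).resolve R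
  rw [R.card_verts_resolve] at this
  omega

lemma exists_quartetDistinguishes (hdef : Defines Q T) {e : Sym2 ℕ} (he : e ∈ T.interiorEdges) :
    ∃ q ∈ Q, QuartetDistinguishes T q e := by
  induction e using Sym2.ind with
  | _ u v =>
    by_contra hnd
    have := hdef.card_verts_eq (PhyloTree.leaves_contract he) fun q hq a b c d h =>
      ((hdef.2.1 q hq).2 a b c d h).contract he fun hd => hnd ⟨q, hq, a, b, c, d, h, hd⟩
    have := PhyloTree.card_verts_contract_add_one he
    omega

end Defines

/-- **Lemma 2, part 2.** If a set `Q` of quartets defines a phylogenetic tree `T`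
with `|L(T)| = n`, then `|Q| ≥ n - 3`, and in case of equality every quartet in
`Q` distinguishes an interior edge of `T`. -/
theorem defines_card_lower_bound
    (Q : Finset PhyloTree) (hQ : ∀ q ∈ Q, IsQuartet q)
    (T : PhyloTree) (n : ℕ) (hn : T.leaves.card = n)
    (hdef : Defines Q T) :
    (n : ℤ) - 3 ≤ (Q.card : ℤ) ∧
    ((Q.card : ℤ) = (n : ℤ) - 3 →
      ∀ q ∈ Q, ∃ e ∈ T.interiorEdges, QuartetDistinguishes T q e) := by
  by_cases hn₄ : n < 4
  · refine ⟨by omega, fun hQn q hq => ?_⟩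
    rw [Finset.card_eq_zero.1 (by omega : Q.card = 0)] at hq
    exact absurd hq (Finset.notMem_empty q)
  have hV : n ≤ T.verts.card := hn ▸ Finset.card_le_card (Finset.filter_subset _ _)
  have hcount := PhyloTree.card_interiorEdges_add_three (hdef.isBinary (by omega)) (by omega)
  have hs : ∀ e ∈ T.interiorEdges, ∃ q ∈ Q, QuartetDistinguishes T q e :=
    fun e he => hdef.exists_quartetDistinguishes he
  have ht : ∀ q ∈ Q, {e | e ∈ T.interiorEdges ∧ QuartetDistinguishes T q e}.Subsingleton :=
    fun q hq e₁ h₁ e₂ h₂ => QuartetDistinguishes.unique (hQ q hq).2 h₁.2 h₂.2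
  have hle := Finset.card_le_card_of_forall_subsingleton _ hs ht
  exact ⟨by omega,
    fun hQn => Finset.exists_rel_of_card_le_of_forall_subsingleton _ hs ht (by omega)⟩
end
end

section
/- Let T be a binary phylogenetic tree and let Q be an excess-free set of quartets displayed by T with L(Q) = L(T) such that every interior edge of T is distinguished by an element of Q. Then (Q, Exc(Q)) is a patchwork. -/
noncomputable section

attribute [local instance] Classical.propDecidable

/-- The excess of a set `Q` of quartets: `exc(Q) = |L(Q)| - 3 - |Q|`. -/
def excQ (Q : Finset PhyloTree) : ℤ := ((leafSet Q).card : ℤ) - 3 - (Q.card : ℤ)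

/-- `Exc(Q) = {Q' ⊆ Q : exc(Q') = 0}`, the collection of excess-free subsets of `Q`. -/
def ExcSet (Q : Finset PhyloTree) : Set (Finset PhyloTree) :=
  {Q' | Q' ⊆ Q ∧ excQ Q' = 0}

/-- `(Q, 𝒞)` is a patchwork: whenever `C1, C2 ∈ 𝒞` intersect, both `C1 ∩ C2`
and `C1 ∪ C2` belong to `𝒞`. -/
def IsPatchwork {α : Type*} [DecidableEq α] (𝒞 : Set (Finset α)) : Prop :=
  ∀ C1 ∈ 𝒞, ∀ C2 ∈ 𝒞, (C1 ∩ C2).Nonempty → C1 ∩ C2 ∈ 𝒞 ∧ C1 ∪ C2 ∈ 𝒞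

/-!
Choose for every interior edge `e` a quartet `f e ∈ Q` distinguishing it. Everything rests on a
Steiner-tree count: if each edge of a nonempty set `E'` of interior edges is distinguished by a
quartet with leaves in `S`, then `|E'| + 3 ≤ |S|`. In the subtree `F` of `T` spanned by `S`, both
ends of such an edge have degree at least 3 (each of the two paths of the quartet contributes an
edge besides `e`), and every vertex of degree 1 lies in `S`; a forest has at least two more
vertices of degree 1 than of degree at least 3, and `E'` is a forest on the latter, whence
`|E'| + 1 + 2 ≤ |S|`.

With `|S| = 4` this says that a quartet distinguishes at most one interior edge, so `f` is
injective; a binary tree has at least `|L(T)| - 3 = |Q|` interior edges, so `f` is onto `Q`.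
Applied to `f⁻¹(Q')` the count gives `exc(Q') ≥ 0` for every nonempty `Q' ⊆ Q`. Since `exc` is
submodular, `exc(C₁ ∪ C₂) + exc(C₁ ∩ C₂) ≤ exc(C₁) + exc(C₂) = 0`, and both terms on the left are
nonnegative when `C₁ ∩ C₂ ≠ ∅`.
-/

open SimpleGraph Finset

lemma SimpleGraph.IsAcyclic.card_edgeSet_add_one_le {V : Type*} [Finite V] [Nonempty V]
    {G : SimpleGraph V} (hG : G.IsAcyclic) : Nat.card G.edgeSet + 1 ≤ Nat.card V := by
  obtain ⟨F, hGF, -, hF⟩ := connected_top.exists_isTree_le_of_le_of_isAcyclic le_top hG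
  rw [← (isTree_iff_connected_and_card.1 hF).2]
  gcongr
  exact Nat.card_mono (Set.toFinite _) (edgeSet_mono hGF)

section graphOfEdges

variable {E E' : Finset (Sym2 ℕ)} {W : Finset ℕ}

lemma mem_of_mem_edgeSet_graphOfEdges {e : Sym2 ℕ} (he : e ∈ (graphOfEdges E).edgeSet) :
    e ∈ E := by
  induction e using Sym2.ind with
  | _ a b => exact he.2

lemma graphOfEdges_mono (h : E ⊆ E') : graphOfEdges E ≤ graphOfEdges E' :=
  fun _ _ hadj => ⟨hadj.1, h hadj.2⟩

lemma mem_of_mem_support_graphOfEdges (hW : ∀ e ∈ E, ∀ x ∈ e, x ∈ W) {u v : ℕ}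
    (p : (graphOfEdges E).Walk u v) (hu : u ∈ W) : ∀ x ∈ p.support, x ∈ W := by
  induction p with
  | nil => simpa using hu
  | cons h p ih =>
    simp only [Walk.support_cons, List.mem_cons, forall_eq_or_imp]
    exact ⟨hu, ih (hW _ h.2 _ (Sym2.mem_mk_right _ _))⟩

lemma natCard_edgeSet_induce_graphOfEdges (hE : ∀ e ∈ E, ¬ e.IsDiag)
    (hW : ∀ e ∈ E, ∀ x ∈ e, x ∈ W) :
    Nat.card ((graphOfEdges E).induce (W : Set ℕ)).edgeSet = E.card := by
  have himage : Sym2.map Subtype.val '' ((graphOfEdges E).induce (W : Set ℕ)).edgeSet = E := by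
    ext e
    induction e using Sym2.ind with
    | _ a b =>
      constructor
      · rintro ⟨z, hz, hze⟩
        induction z using Sym2.ind with
        | _ x y =>
          simp only [Sym2.map_mk] at hze
          rw [← hze]
          exact hz.2
      · intro he
        have ha := hW _ he a (Sym2.mem_mk_left _ _)
        have hb := hW _ he b (Sym2.mem_mk_right _ _)
        exact ⟨s(⟨a, ha⟩, ⟨b, hb⟩), ⟨fun h => hE _ he (by simpa using h), he⟩, rfl⟩
  rw [Nat.card_coe_set_eq,
    ← Set.ncard_image_of_injective _ (Sym2.map.injective Subtype.val_injective), himage,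
    Set.ncard_coe_finset]

lemma card_add_one_le_card_of_isAcyclic (hE : ∀ e ∈ E, ¬ e.IsDiag)
    (hW : ∀ e ∈ E, ∀ x ∈ e, x ∈ W) (hne : W.Nonempty) (hac : (graphOfEdges E).IsAcyclic) :
    E.card + 1 ≤ W.card := by
  have : Nonempty (W : Set ℕ) := hne.coe_sort
  have := (hac.induce (W : Set ℕ)).card_edgeSet_add_one_le
  rwa [natCard_edgeSet_induce_graphOfEdges hE hW, Nat.card_coe_set_eq,
    Set.ncard_coe_finset] at this

lemma card_le_card_add_one_of_reachable (hE : ∀ e ∈ E, ¬ e.IsDiag)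
    (hW : ∀ e ∈ E, ∀ x ∈ e, x ∈ W) (hne : W.Nonempty)
    (hconn : ∀ u ∈ W, ∀ v ∈ W, (graphOfEdges E).Reachable u v) :
    W.card ≤ E.card + 1 := by
  have : Nonempty (W : Set ℕ) := hne.coe_sort
  have hconn' : ((graphOfEdges E).induce (W : Set ℕ)).Connected := by
    refine Connected.mk fun ⟨u, hu⟩ ⟨v, hv⟩ => ?_
    obtain ⟨p⟩ := hconn u hu v hv
    exact ⟨p.induce _ (mem_of_mem_support_graphOfEdges hW p hu)⟩
  have := hconn'.card_vert_le_card_edgeSet_add_one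
  rwa [natCard_edgeSet_induce_graphOfEdges hE hW, Nat.card_coe_set_eq,
    Set.ncard_coe_finset] at this

lemma sum_degOf_eq_two_mul_card (hE : ∀ e ∈ E, ¬ e.IsDiag) (hW : ∀ e ∈ E, ∀ x ∈ e, x ∈ W) :
    ∑ v ∈ W, degOf E v = 2 * E.card := by
  have hcount : ∀ e ∈ E, (W.filter (· ∈ e)).card = 2 := fun e he => by
    rw [← Sym2.card_toFinset_of_not_isDiag e (hE e he)]
    congr 1
    ext x
    simpa using hW e he x
  calc ∑ v ∈ W, degOf E v = ∑ e ∈ E, (W.filter (· ∈ e)).card :=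
        sum_card_bipartiteAbove_eq_sum_card_bipartiteBelow _
    _ = 2 * E.card := by rw [sum_congr rfl hcount, sum_const, smul_eq_mul, mul_comm]

lemma card_branch_add_two_le_card_leaf (hE : ∀ e ∈ E, ¬ e.IsDiag)
    (hW : ∀ e ∈ E, ∀ x ∈ e, x ∈ W) (hpos : ∀ v ∈ W, 0 < degOf E v) (hne : E.Nonempty)
    (hac : (graphOfEdges E).IsAcyclic) :
    (W.filter (3 ≤ degOf E ·)).card + 2 ≤ (W.filter (degOf E · = 1)).card := by
  obtain ⟨e, he⟩ := hne
  have hforest := card_add_one_le_card_of_isAcyclic hE hW ⟨_, hW e he _ e.out_fst_mem⟩ hac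
  have hsum := sum_degOf_eq_two_mul_card hE hW
  have hpointwise : ∀ v ∈ W, 2 + (if 3 ≤ degOf E v then 1 else 0) ≤
      degOf E v + (if degOf E v = 1 then 1 else 0) := fun v hv => by
    have := hpos v hv
    split_ifs <;> omega
  have := sum_le_sum hpointwise
  rw [sum_add_distrib, sum_add_distrib, ← card_filter, ← card_filter, sum_const,
    smul_eq_mul] at this
  omega

end graphOfEdges

lemma SimpleGraph.Walk.IsPath.exists_ne_mem_edges_of_mem_support {V : Type*}
    {G : SimpleGraph V} {u v x : V} {p : G.Walk u v} (hp : p.IsPath) (hx : x ∈ p.support)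
    (hxu : x ≠ u) (hxv : x ≠ v) :
    ∃ f₁ ∈ p.edges, ∃ f₂ ∈ p.edges, f₁ ≠ f₂ ∧ x ∈ f₁ ∧ x ∈ f₂ := by
  set q₁ := p.takeUntil x hx
  set q₂ := p.dropUntil x hx
  have hedges : p.edges = q₁.edges ++ q₂.edges := by
    rw [← Walk.edges_append, p.take_spec hx]
  have hnodup := hp.isTrail.edges_nodup
  rw [hedges] at hnodup
  have h₁ := q₁.mk_penultimate_end_mem_edges (Walk.not_nil_of_ne hxu.symm)
  have h₂ := q₂.mk_start_snd_mem_edges (Walk.not_nil_of_ne hxv)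
  refine ⟨_, hedges ▸ List.mem_append_left _ h₁, _, hedges ▸ List.mem_append_right _ h₂,
    (List.nodup_append.1 hnodup).2.2 _ h₁ _ h₂, Sym2.mem_mk_right _ _, Sym2.mem_mk_left _ _⟩

lemma SimpleGraph.Walk.IsPath.exists_mem_edges_ne {V : Type*} {G : SimpleGraph V}
    {u v x : V} {p : G.Walk u v} (hp : p.IsPath) {e : Sym2 V} (he : e ∈ p.edges) (hxe : x ∈ e)
    (hxu : x ≠ u) (hxv : x ≠ v) : ∃ f ∈ p.edges, f ≠ e ∧ x ∈ f := by
  obtain ⟨f₁, hf₁, f₂, hf₂, hne, hx₁, hx₂⟩ :=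
    hp.exists_ne_mem_edges_of_mem_support (Walk.mem_support_of_mem_edges he hxe) hxu hxv
  by_cases h : f₁ = e
  · exact ⟨f₂, hf₂, fun h' => hne (h.trans h'.symm), hx₂⟩
  · exact ⟨f₁, hf₁, h, hx₁⟩

lemma card_le_degOf {E s : Finset (Sym2 ℕ)} {v : ℕ} (hs : s ⊆ E) (hv : ∀ f ∈ s, v ∈ f) :
    s.card ≤ degOf E v :=
  card_le_card fun f hf => mem_filter.2 ⟨hs hf, hv f hf⟩

namespace PhyloTree

def steinerEdges (T : PhyloTree) (S : Finset ℕ) : Finset (Sym2 ℕ) :=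
  T.edges.filter fun e => ∃ s ∈ S, ∃ t ∈ S, ∃ p : T.graph.Walk s t, p.IsPath ∧ e ∈ p.edges

variable {T : PhyloTree} {S : Finset ℕ}

lemma mem_steinerEdges {s t : ℕ} (hs : s ∈ S) (ht : t ∈ S) {p : T.graph.Walk s t}
    (hp : p.IsPath) {e : Sym2 ℕ} (he : e ∈ p.edges) : e ∈ T.steinerEdges S :=
  mem_filter.2
    ⟨mem_of_mem_edgeSet_graphOfEdges (p.edges_subset_edgeSet he), s, hs, t, ht, p, hp, he⟩

lemma mem_of_degOf_steinerEdges_eq_one {v : ℕ} (hv : degOf (T.steinerEdges S) v = 1) :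
    v ∈ S := by
  obtain ⟨e, he⟩ := card_pos.1 (by omega : 0 < degOf (T.steinerEdges S) v)
  obtain ⟨heF, hve⟩ := mem_filter.1 he
  obtain ⟨-, s, hs, t, ht, p, hp, hep⟩ := mem_filter.1 heF
  by_contra hvS
  obtain ⟨f₁, hf₁, f₂, hf₂, hne, hv₁, hv₂⟩ := hp.exists_ne_mem_edges_of_mem_support
    (Walk.mem_support_of_mem_edges hep hve) (by rintro rfl; exact hvS hs)
    (by rintro rfl; exact hvS ht)
  have := card_le_degOf (s := {f₁, f₂}) (E := T.steinerEdges S) (v := v)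
    (insert_subset (mem_steinerEdges hs ht hp hf₁) (singleton_subset_iff.2
      (mem_steinerEdges hs ht hp hf₂))) (by simp [hv₁, hv₂])
  rw [card_pair hne] at this
  omega

lemma ne_of_mem_interiorEdges {e : Sym2 ℕ} (he : e ∈ T.interiorEdges) {u : ℕ} (hu : u ∈ e)
    {a : ℕ} (ha : a ∈ T.leaves) : u ≠ a := by
  rintro rfl
  exact (mem_filter.1 he).2 u hu (mem_filter.1 ha).2

end PhyloTree

lemma Distinguishes.mem_steinerEdges {T : PhyloTree} {S : Finset ℕ} {a b c d : ℕ}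
    {e : Sym2 ℕ} (hdist : Distinguishes T a b c d e) (ha : a ∈ S) (hc : c ∈ S) :
    e ∈ T.steinerEdges S := by
  obtain ⟨-, p, q, hp, -, hpq⟩ := hdist
  have hepq : e ∈ p.edges.toFinset ∩ q.edges.toFinset := hpq ▸ mem_singleton_self e
  exact PhyloTree.mem_steinerEdges ha hc hp (List.mem_toFinset.1 (mem_inter.1 hepq).1)

open PhyloTree in
lemma Distinguishes.three_le_degOf_steinerEdges {T : PhyloTree} {S : Finset ℕ}
    {a b c d : ℕ} {e : Sym2 ℕ} (hdist : Distinguishes T a b c d e)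
    (ha : a ∈ S) (hb : b ∈ S) (hc : c ∈ S) (hd : d ∈ S) (he : e ∈ T.interiorEdges)
    {u : ℕ} (hu : u ∈ e) : 3 ≤ degOf (T.steinerEdges S) u := by
  have heF := hdist.mem_steinerEdges ha hc
  obtain ⟨⟨haT, hbT, hcT, hdT, -⟩, p, q, hp, hq, hpq⟩ := hdist
  have hepq : e ∈ p.edges.toFinset ∩ q.edges.toFinset := hpq ▸ mem_singleton_self e
  simp only [mem_inter, List.mem_toFinset] at hepq
  obtain ⟨fp, hfp, hfpe, hufp⟩ := hp.exists_mem_edges_ne hepq.1 hu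
    (ne_of_mem_interiorEdges he hu haT) (ne_of_mem_interiorEdges he hu hcT)
  obtain ⟨fq, hfq, hfqe, hufq⟩ := hq.exists_mem_edges_ne hepq.2 hu
    (ne_of_mem_interiorEdges he hu hbT) (ne_of_mem_interiorEdges he hu hdT)
  have hfpq : fp ≠ fq := by
    rintro rfl
    have : fp ∈ p.edges.toFinset ∩ q.edges.toFinset := by simp [hfp, hfq]
    exact hfpe (mem_singleton.1 (hpq ▸ this))
  have := card_le_degOf (s := {e, fp, fq}) (E := T.steinerEdges S) (v := u)
    (by simp [insert_subset_iff, heF, PhyloTree.mem_steinerEdges ha hc hp hfp,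
      PhyloTree.mem_steinerEdges hb hd hq hfq])
    (by simp [hu, hufp, hufq])
  rwa [card_insert_of_notMem (by simp [hfpe.symm, hfqe.symm]), card_pair hfpq] at this

namespace PhyloTree

theorem card_add_three_le_card_of_forall_quartetDistinguishes (T : PhyloTree) {S : Finset ℕ}
    {E' : Finset (Sym2 ℕ)} (hne : E'.Nonempty) (hE' : E' ⊆ T.interiorEdges)
    (hdist : ∀ e ∈ E', ∃ q : PhyloTree, q.leaves ⊆ S ∧ QuartetDistinguishes T q e) :
    E'.card + 3 ≤ S.card := by
  set F := T.steinerEdges S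
  have hFT : F ⊆ T.edges := filter_subset _ _
  have hbranch : ∀ e ∈ E', e ∈ F ∧ ∀ u ∈ e, 3 ≤ degOf F u := fun e he => by
    obtain ⟨q, hqS, a, b, c, d, ⟨ha, hb, hc, hd, -⟩, hdist⟩ := hdist e he
    exact ⟨hdist.mem_steinerEdges (hqS ha) (hqS hc), fun u hu =>
      hdist.three_le_degOf_steinerEdges (hqS ha) (hqS hb) (hqS hc) (hqS hd) (hE' he) hu⟩
  set W := T.verts.filter (0 < degOf F ·)
  have hFW : ∀ e ∈ F, ∀ x ∈ e, x ∈ W := fun e he x hx =>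
    mem_filter.2 ⟨T.edge_verts e (hFT he) x hx, card_pos.2 ⟨e, mem_filter.2 ⟨he, hx⟩⟩⟩
  set B := W.filter (3 ≤ degOf F ·)
  have hE'B : ∀ e ∈ E', ∀ u ∈ e, u ∈ B := fun e he u hu =>
    mem_filter.2 ⟨hFW e (hbranch e he).1 u hu, (hbranch e he).2 u hu⟩
  obtain ⟨e₀, he₀⟩ := hne
  have h₁ : E'.card + 1 ≤ B.card :=
    card_add_one_le_card_of_isAcyclic (fun e he => T.not_diag e (hFT (hbranch e he).1)) hE'B
      ⟨_, hE'B e₀ he₀ _ e₀.out_fst_mem⟩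
      (T.acyclic.anti (graphOfEdges_mono fun e he => hFT (hbranch e he).1))
  have h₂ : B.card + 2 ≤ (W.filter (degOf F · = 1)).card :=
    card_branch_add_two_le_card_leaf (fun e he => T.not_diag e (hFT he)) hFW
      (fun v hv => (mem_filter.1 hv).2) ⟨e₀, (hbranch e₀ he₀).1⟩
      (T.acyclic.anti (graphOfEdges_mono hFT))
  have h₃ : (W.filter (degOf F · = 1)).card ≤ S.card :=
    card_le_card fun v hv => mem_of_degOf_steinerEdges_eq_one (mem_filter.1 hv).2
  omega

end PhyloTree

lemma QuartetDistinguishes.eq_of_mem_interiorEdges {T q : PhyloTree} {e₁ e₂ : Sym2 ℕ}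
    (hq : q.leaves.card = 4) (he₁ : e₁ ∈ T.interiorEdges) (he₂ : e₂ ∈ T.interiorEdges)
    (h₁ : QuartetDistinguishes T q e₁) (h₂ : QuartetDistinguishes T q e₂) : e₁ = e₂ := by
  by_contra hne
  have := T.card_add_three_le_card_of_forall_quartetDistinguishes (S := q.leaves)
    (E' := {e₁, e₂}) (insert_nonempty _ _) (insert_subset he₁ (singleton_subset_iff.2 he₂))
    (by simpa using ⟨⟨q, subset_rfl, h₁⟩, ⟨q, subset_rfl, h₂⟩⟩)
  rw [card_pair hne, hq] at this
  omega

namespace PhyloTree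

theorem IsBinary.card_leaves_le {T : PhyloTree} (hbin : T.IsBinary) :
    T.leaves.card ≤ T.interiorEdges.card + 3 := by
  have hsum := sum_degOf_eq_two_mul_card T.not_diag T.edge_verts
  have hconn := card_le_card_add_one_of_reachable T.not_diag T.edge_verts T.verts_nonempty T.conn
  have hverts : T.leaves.card + T.interiorVerts.card = T.verts.card :=
    card_filter_add_card_filter_not _
  have hdeg : ∑ v ∈ T.verts, degOf T.edges v = T.leaves.card + 3 * T.interiorVerts.card := by
    rw [← sum_filter_add_sum_filter_not T.verts (degOf T.edges · = 1),
      sum_congr rfl fun v hv => (mem_filter.1 hv).2,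
      sum_congr rfl fun v hv => hbin v (mem_filter.1 hv).1 (mem_filter.1 hv).2]
    simp [leaves, interiorVerts, mul_comm]
  have hedges : T.edges.card ≤ T.interiorEdges.card + T.leaves.card :=
    calc T.edges.card
        = T.interiorEdges.card + (T.edges.filter fun e => ¬ ∀ x ∈ e, degOf T.edges x ≠ 1).card :=
          (card_filter_add_card_filter_not _).symm
      _ ≤ T.interiorEdges.card + (T.leaves.biUnion fun v => T.edges.filter (v ∈ ·)).card := by
          gcongr
          intro e he
          obtain ⟨he, hleaf⟩ := mem_filter.1 he
          obtain ⟨x, hx, hx1⟩ := not_forall₂.1 hleaf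
          exact mem_biUnion.2 ⟨x, mem_filter.2 ⟨T.edge_verts e he x hx, not_not.1 hx1⟩,
            mem_filter.2 ⟨he, hx⟩⟩
      _ ≤ T.interiorEdges.card + ∑ v ∈ T.leaves, degOf T.edges v := by
          gcongr
          exact card_biUnion_le
      _ = T.interiorEdges.card + T.leaves.card := by
          rw [sum_congr rfl fun v (hv : v ∈ T.leaves) => (mem_filter.1 hv).2, sum_const,
            smul_eq_mul, mul_one]
  omega

end PhyloTree

lemma leafSet_mono {P P' : Finset PhyloTree} (h : P ⊆ P') : leafSet P ⊆ leafSet P' :=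
  sup_mono h

lemma leaves_subset_leafSet {P : Finset PhyloTree} {q : PhyloTree} (hq : q ∈ P) :
    q.leaves ⊆ leafSet P :=
  le_sup (f := PhyloTree.leaves) hq

lemma excQ_union_add_excQ_inter_le (C₁ C₂ : Finset PhyloTree) :
    excQ (C₁ ∪ C₂) + excQ (C₁ ∩ C₂) ≤ excQ C₁ + excQ C₂ := by
  have hunion : leafSet (C₁ ∪ C₂) = leafSet C₁ ∪ leafSet C₂ := sup_union
  have hinter : (leafSet (C₁ ∩ C₂)).card ≤ (leafSet C₁ ∩ leafSet C₂).card :=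
    card_le_card (subset_inter (leafSet_mono inter_subset_left) (leafSet_mono inter_subset_right))
  have hleaf := card_union_add_card_inter (leafSet C₁) (leafSet C₂)
  have hcard := card_union_add_card_inter C₁ C₂
  unfold excQ
  rw [hunion]
  omega

lemma isPatchwork_excSet {Q : Finset PhyloTree}
    (hnonneg : ∀ Q' ⊆ Q, Q'.Nonempty → 0 ≤ excQ Q') : IsPatchwork (ExcSet Q) := by
  rintro C₁ ⟨hC₁, hexc₁⟩ C₂ ⟨hC₂, hexc₂⟩ hne
  have hinter := hnonneg _ (inter_subset_left.trans hC₁) hne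
  have hunion := hnonneg _ (union_subset hC₁ hC₂) (hne.mono (inter_subset_union))
  have := excQ_union_add_excQ_inter_le C₁ C₂
  exact ⟨⟨inter_subset_left.trans hC₁, by omega⟩, ⟨union_subset hC₁ hC₂, by omega⟩⟩

lemma excQ_nonneg_of_subset_image {T : PhyloTree} {Q' : Finset PhyloTree}
    {f : Sym2 ℕ → PhyloTree} (hf : ∀ e ∈ T.interiorEdges, QuartetDistinguishes T (f e) e)
    (hQ' : Q' ⊆ T.interiorEdges.image f) (hne : Q'.Nonempty) : 0 ≤ excQ Q' := by
  set E' := T.interiorEdges.filter (f · ∈ Q')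
  have hQ'E' : Q' ⊆ E'.image f := fun q hq => by
    obtain ⟨e, he, rfl⟩ := mem_image.1 (hQ' hq)
    exact mem_image_of_mem f (mem_filter.2 ⟨he, hq⟩)
  have hE' := T.card_add_three_le_card_of_forall_quartetDistinguishes (S := leafSet Q')
    (image_nonempty.1 (hne.mono hQ'E')) (filter_subset _ _) fun e he =>
    ⟨f e, leaves_subset_leafSet (mem_filter.1 he).2, hf e (mem_filter.1 he).1⟩
  have hcard := (card_le_card hQ'E').trans card_image_le
  unfold excQ
  omega

theorem excess_free_distinguishing_is_patchwork_general
    (T : PhyloTree) (hbin : T.IsBinary)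
    (Q : Finset PhyloTree) (hQ : ∀ q ∈ Q, IsQuartet q)
    (hL : leafSet Q = T.leaves)
    (hexc : excQ Q = 0)
    (hdist : ∀ e ∈ T.interiorEdges, ∃ q ∈ Q, QuartetDistinguishes T q e) :
    IsPatchwork (ExcSet Q) := by
  have : Nonempty PhyloTree := ⟨T⟩
  choose! f hfQ hfdist using hdist
  have hinj : Set.InjOn f T.interiorEdges := fun e₁ he₁ e₂ he₂ h =>
    (h ▸ hfdist e₁ he₁).eq_of_mem_interiorEdges (hQ _ (hfQ e₂ he₂)).2 he₁ he₂ (hfdist e₂ he₂)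
  have himage : T.interiorEdges.image f = Q := by
    refine eq_of_subset_of_card_le (image_subset_iff.2 hfQ) ?_
    have hleaves := hbin.card_leaves_le
    rw [← hL] at hleaves
    unfold excQ at hexc
    rw [card_image_of_injOn hinj]
    omega
  exact isPatchwork_excSet fun Q' hQ' hne => excQ_nonneg_of_subset_image hfdist (himage ▸ hQ') hne

/-- **Lemma 5.** Let `T` be a binary phylogenetic tree and `Q` an excess-free set
of quartets displayed by `T` with `L(Q) = L(T)` such that every interior edge of
`T` is distinguished by an element of `Q`. Then `(Q, Exc(Q))` is a patchwork. -/
theorem excess_free_distinguishing_is_patchwork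
    (T : PhyloTree) (hbin : T.IsBinary)
    (Q : Finset PhyloTree) (hQ : ∀ q ∈ Q, IsQuartet q)
    (hdisp : ∀ q ∈ Q, T.Displays q)
    (hL : leafSet Q = T.leaves)
    (hexc : excQ Q = 0)
    (hdist : ∀ e ∈ T.interiorEdges, ∃ q ∈ Q, QuartetDistinguishes T q e) :
    IsPatchwork (ExcSet Q) :=
  excess_free_distinguishing_is_patchwork_general T hbin Q hQ hL hexc hdist
end
end

section
/- Let G = (V, A) be a finite digraph with an arc labeling λ assigning to each arc a 2-element subset of a set X, and suppose that any two distinct arcs of G leaving the same vertex have disjoint labels. Then every coloured cycle of G is a directed cycle, and every arc a with λ(a) = {x, y} is contained in at most one x-coloured cycle and in at most one y-coloured cycle of G. -/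
noncomputable section

attribute [local instance] Classical.propDecidable

variable {V X : Type*}

/-- The underlying undirected simple graph of the digraph with arc set `A`. -/
def underlyingGraph [DecidableEq V] (A : Finset (V × V)) : SimpleGraph V where
  Adj u v := u ≠ v ∧ ((u, v) ∈ A ∨ (v, u) ∈ A)
  symm := by
    constructor
    intro u v h
    exact ⟨h.1.symm, h.2.symm⟩
  loopless := by constructor; intro v h; exact h.1 rfl

/-- The finite edge set `E` is the edge set of a cycle of the graph `G`. -/
def IsCycleEdgeSet [DecidableEq V] (G : SimpleGraph V) (E : Finset (Sym2 V)) : Prop :=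
  ∃ (u : V) (w : G.Walk u u), w.IsCycle ∧ w.edges.toFinset = E

/-- `S` is an `x`-coloured cycle of the digraph `(V, A)` with arc labeling `lab`:
`S` is a set of arcs, all of whose labels contain `x`, whose underlying edges are
pairwise distinct and form a cycle of the underlying undirected graph. -/
def IsColouredCycleWith [DecidableEq V] (A : Finset (V × V)) (lab : V × V → Finset X)
    (x : X) (S : Finset (V × V)) : Prop :=
  S ⊆ A ∧ (∀ a ∈ S, x ∈ lab a) ∧
  Set.InjOn (fun a : V × V => s(a.1, a.2)) ↑S ∧
  IsCycleEdgeSet (underlyingGraph A) (S.image (fun a : V × V => s(a.1, a.2)))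

/-- `S` is a coloured cycle: an `x`-coloured cycle for some `x`. -/
def IsColouredCycle [DecidableEq V] (A : Finset (V × V)) (lab : V × V → Finset X)
    (S : Finset (V × V)) : Prop :=
  ∃ x : X, IsColouredCycleWith A lab x S

/-- A set of arcs forming a cycle is a directed cycle iff at every vertex the
number of arcs leaving it equals the number of arcs entering it. -/
def IsDirectedCycleSet [DecidableEq V] (S : Finset (V × V)) : Prop :=
  ∀ v : V, (S.filter (fun a => a.1 = v)).card = (S.filter (fun a => a.2 = v)).card

/-! In an `x`-coloured cycle every arc carries `x`, so by the disjointness hypothesis each vertex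
has out-degree at most one. Being a closed trail, the cycle has even degree at every vertex, hence
out-degree at most in-degree everywhere; as both sum to the number of arcs, they agree, and the
cycle is directed. Consequently every arc `b` of an `x`-coloured cycle is followed in it by the
unique arc of `A` leaving `b.2` whose label contains `x`. This successor map permutes each
`x`-coloured cycle, so two of them sharing an arc share all arcs around each common vertex, and
connectedness of the cycle spreads this to all its arcs. -/

section

open Finset

theorem SimpleGraph.Walk.iff_of_mem_support {G : SimpleGraph V} {P : V → Prop} {u v : V}
    (w : G.Walk u v) (hP : ∀ p q, s(p, q) ∈ w.edges → P p → P q) :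
    ∀ z ∈ w.support, P z ↔ P u := by
  induction w with
  | nil => simp
  | @cons a b c h q ih =>
    rw [support_cons, List.forall_mem_cons]
    have hab : P a ↔ P b :=
      ⟨hP a b (by simp), hP b a (by simp [Sym2.eq_swap])⟩
    refine ⟨Iff.rfl, fun z hz => ?_⟩
    rw [ih (fun p q hpq => hP p q (by simp [hpq])) z hz, hab]

theorem Set.mem_of_apply_mem_of_injOn {α : Type*} {f : α → α} {s t : Set α} (hs : s.Finite)
    (hfs : MapsTo f s s) (hinj : InjOn f s) (hft : MapsTo f t t) {a : α} (ha : a ∈ s)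
    (hfa : f a ∈ t) : a ∈ t := by
  have : Finite s := hs
  obtain ⟨n, hn, hper⟩ := Function.mem_periodicPts.mp
    ((hfs.restrict_inj.mpr hinj).mem_periodicPts ⟨a, ha⟩)
  have hna : f^[n] a = a := by
    simpa [hfs.coe_iterate_restrict] using congrArg Subtype.val hper
  obtain ⟨m, rfl⟩ := Nat.exists_eq_add_of_lt hn
  rw [← hna, Nat.zero_add, Function.iterate_succ_apply]
  exact hft.iterate m hfa

theorem Finset.card_filter_fst_eq_of_le [DecidableEq V] {S : Finset (V × V)}
    (hle : ∀ v, #(S.filter fun a => a.1 = v) ≤ #(S.filter fun a => a.2 = v)) (v : V) :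
    #(S.filter fun a => a.1 = v) = #(S.filter fun a => a.2 = v) := by
  set T := insert v (S.image Prod.fst ∪ S.image Prod.snd)
  have hfst : ∀ a ∈ S, a.1 ∈ T := fun a ha =>
    mem_insert_of_mem (mem_union_left _ (mem_image_of_mem _ ha))
  have hsnd : ∀ a ∈ S, a.2 ∈ T := fun a ha =>
    mem_insert_of_mem (mem_union_right _ (mem_image_of_mem _ ha))
  have hsum : ∑ z ∈ T, #(S.filter fun a => a.1 = z) = ∑ z ∈ T, #(S.filter fun a => a.2 = z) := by
    rw [← card_eq_sum_card_fiberwise hfst, ← card_eq_sum_card_fiberwise hsnd]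
  exact (sum_eq_sum_iff_of_le fun z _ => hle z).mp hsum v (mem_insert_self v _)

def HasDisjointOutLabels (A : Finset (V × V)) (lab : V × V → Finset X) : Prop :=
  ∀ a ∈ A, ∀ b ∈ A, a ≠ b → a.1 = b.1 → Disjoint (lab a) (lab b)

/-- The arc of `A` leaving the head of `b` whose label contains `x`; `b` itself if there is none. -/
def colourSucc (A : Finset (V × V)) (lab : V × V → Finset X) (x : X) (b : V × V) : V × V :=
  if h : ∃ c ∈ A, c.1 = b.2 ∧ x ∈ lab c then h.choose else b

variable {A : Finset (V × V)} {lab : V × V → Finset X} {x : X}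

theorem HasDisjointOutLabels.eq_of_fst_eq (hA : HasDisjointOutLabels A lab) {a b : V × V}
    (ha : a ∈ A) (hb : b ∈ A) (hxa : x ∈ lab a) (hxb : x ∈ lab b) (h : a.1 = b.1) : a = b := by
  by_contra hne
  exact disjoint_left.mp (hA a ha b hb hne h) hxa hxb

theorem HasDisjointOutLabels.colourSucc_eq (hA : HasDisjointOutLabels A lab) {b c : V × V}
    (hc : c ∈ A) (hcb : c.1 = b.2) (hxc : x ∈ lab c) : colourSucc A lab x b = c := by
  have hex : ∃ c ∈ A, c.1 = b.2 ∧ x ∈ lab c := ⟨c, hc, hcb, hxc⟩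
  obtain ⟨hmem, hfst, hx⟩ := hex.choose_spec
  rw [colourSucc, dif_pos hex]
  exact hA.eq_of_fst_eq hmem hc hx hxc (hfst.trans hcb.symm)

namespace IsColouredCycleWith

variable [DecidableEq V] {S S₁ S₂ : Finset (V × V)}

theorem fst_ne_snd (hS : IsColouredCycleWith A lab x S) {a : V × V} (ha : a ∈ S) :
    a.1 ≠ a.2 := by
  obtain ⟨-, -, -, u, w, -, hE⟩ := hS
  have hedge : s(a.1, a.2) ∈ w.edges.toFinset := hE ▸ mem_image_of_mem _ ha
  exact (w.adj_of_mem_edges (List.mem_toFinset.mp hedge)).1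

theorem even_card_filter_incident (hS : IsColouredCycleWith A lab x S) (v : V) :
    Even #(S.filter fun a => a.1 = v ∨ a.2 = v) := by
  obtain ⟨-, -, hinj, u, w, hw, hE⟩ := hS
  have hincident : (S.filter fun a => a.1 = v ∨ a.2 = v) = S.filter fun a => v ∈ s(a.1, a.2) :=
    filter_congr fun a _ => by simp [eq_comm]
  have hcount : #(S.filter fun a => a.1 = v ∨ a.2 = v) = w.edges.countP (v ∈ ·) := by
    rw [hincident, ← card_image_of_injOn (hinj.mono (coe_subset.mpr (filter_subset _ _))),
      ← filter_image (p := (v ∈ ·)), ← hE, List.countP_eq_length_filter,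
      ← List.toFinset_card_of_nodup (hw.isTrail.edges_nodup.filter _), List.toFinset_filter]
    simp
  rw [hcount, hw.isTrail.even_countP_edges_iff]
  exact fun h => absurd rfl h

theorem card_filter_fst_le_one (hA : HasDisjointOutLabels A lab)
    (hS : IsColouredCycleWith A lab x S) (v : V) : #(S.filter fun a => a.1 = v) ≤ 1 :=
  card_le_one.mpr fun a ha b hb => by
    rw [mem_filter] at ha hb
    exact hA.eq_of_fst_eq (hS.1 ha.1) (hS.1 hb.1) (hS.2.1 a ha.1) (hS.2.1 b hb.1)
      (ha.2.trans hb.2.symm)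

theorem isDirectedCycleSet (hA : HasDisjointOutLabels A lab)
    (hS : IsColouredCycleWith A lab x S) : IsDirectedCycleSet S := by
  refine card_filter_fst_eq_of_le fun v => ?_
  have hdisj : Disjoint (S.filter fun a => a.1 = v) (S.filter fun a => a.2 = v) :=
    disjoint_filter.mpr fun a ha h1 h2 => hS.fst_ne_snd ha (h1.trans h2.symm)
  have heven := hS.even_card_filter_incident v
  rw [filter_or, card_union_of_disjoint hdisj] at heven
  obtain hout | hout := Nat.le_one_iff_eq_zero_or_eq_one.mp (hS.card_filter_fst_le_one hA v)
  · simp [hout]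
  · rw [hout, Nat.one_le_iff_ne_zero]
    intro hin
    simp [hout, hin] at heven

theorem colourSucc_mem (hA : HasDisjointOutLabels A lab) (hS : IsColouredCycleWith A lab x S)
    {b : V × V} (hb : b ∈ S) :
    colourSucc A lab x b ∈ S ∧ (colourSucc A lab x b).1 = b.2 := by
  have hin : 0 < #(S.filter fun a => a.2 = b.2) := card_pos.mpr ⟨b, by simp [hb]⟩
  rw [← hS.isDirectedCycleSet hA b.2] at hin
  obtain ⟨c, hc⟩ := card_pos.mp hin
  rw [mem_filter] at hc
  rw [hA.colourSucc_eq (hS.1 hc.1) hc.2 (hS.2.1 c hc.1)]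
  exact hc

theorem eq_of_snd_eq (hA : HasDisjointOutLabels A lab) (hS : IsColouredCycleWith A lab x S)
    {b c : V × V} (hb : b ∈ S) (hc : c ∈ S) (h : b.2 = c.2) : b = c :=
  card_le_one.mp ((hS.isDirectedCycleSet hA c.2).symm.trans_le (hS.card_filter_fst_le_one hA c.2))
    b (by simp [hb, h]) c (by simp [hc])

theorem injOn_colourSucc (hA : HasDisjointOutLabels A lab)
    (hS : IsColouredCycleWith A lab x S) : Set.InjOn (colourSucc A lab x) S :=
  fun b hb c hc h => hS.eq_of_snd_eq hA hb hc
    (by rw [← (hS.colourSucc_mem hA hb).2, h, (hS.colourSucc_mem hA hc).2])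

theorem mem_of_shares_vertex (hA : HasDisjointOutLabels A lab)
    (hS₁ : IsColouredCycleWith A lab x S₁) (hS₂ : IsColouredCycleWith A lab x S₂)
    {c d : V × V} (hc₁ : c ∈ S₁) (hc₂ : c ∈ S₂) (hd : d ∈ S₁) {v : V}
    (hvc : v ∈ s(c.1, c.2)) (hvd : v ∈ s(d.1, d.2)) : d ∈ S₂ := by
  by_cases hcd : c = d
  · exact hcd ▸ hc₂
  rw [Sym2.mem_iff] at hvc hvd
  rcases hvc with rfl | rfl <;> rcases hvd with h | h
  · exact absurd (hA.eq_of_fst_eq (hS₁.1 hc₁) (hS₁.1 hd) (hS₁.2.1 c hc₁) (hS₁.2.1 d hd) h) hcd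
  · -- `colourSucc` permutes `S₁` and maps `S₂` into itself, so it has no preimage outside `S₂`
    have hdc : colourSucc A lab x d = c := hA.colourSucc_eq (hS₁.1 hc₁) h (hS₁.2.1 c hc₁)
    exact Set.mem_of_apply_mem_of_injOn S₁.finite_toSet
      (fun b hb => (hS₁.colourSucc_mem hA hb).1) (hS₁.injOn_colourSucc hA)
      (fun b hb => (hS₂.colourSucc_mem hA hb).1) hd (hdc ▸ hc₂)
  · rw [← hA.colourSucc_eq (hS₁.1 hd) h.symm (hS₁.2.1 d hd)]
    exact (hS₂.colourSucc_mem hA hc₂).1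
  · exact absurd (hS₁.eq_of_snd_eq hA hc₁ hd h) hcd

theorem subset_of_mem_of_mem (hA : HasDisjointOutLabels A lab)
    (hS₁ : IsColouredCycleWith A lab x S₁) (hS₂ : IsColouredCycleWith A lab x S₂)
    {a : V × V} (ha₁ : a ∈ S₁) (ha₂ : a ∈ S₂) : S₁ ⊆ S₂ := by
  obtain ⟨u, w, -, hE⟩ := hS₁.2.2.2
  have hsupport {b : V × V} (hb : b ∈ S₁) : b.1 ∈ w.support := by
    have hedge : s(b.1, b.2) ∈ w.edges.toFinset := hE ▸ mem_image_of_mem _ hb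
    exact w.fst_mem_support_of_mem_edges (List.mem_toFinset.mp hedge)
  let P (z : V) : Prop := ∃ c ∈ S₁, c ∈ S₂ ∧ z ∈ s(c.1, c.2)
  have hclosed {b : V × V} (hb : b ∈ S₁) {z : V} (hz : z ∈ s(b.1, b.2)) : P z → b ∈ S₂ :=
    fun ⟨c, hc₁, hc₂, hzc⟩ => hS₁.mem_of_shares_vertex hA hS₂ hc₁ hc₂ hb hzc hz
  have hP (p q : V) (hpq : s(p, q) ∈ w.edges) (hp : P p) : P q := by
    obtain ⟨b, hb, hbpq⟩ := mem_image.mp (hE ▸ List.mem_toFinset.mpr hpq)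
    exact ⟨b, hb, hclosed hb (by simp [hbpq]) hp, by simp [hbpq]⟩
  have hPu : P u := (w.iff_of_mem_support hP a.1 (hsupport ha₁)).mp
    ⟨a, ha₁, ha₂, Sym2.mem_mk_left _ _⟩
  exact fun b hb => hclosed hb (Sym2.mem_mk_left _ _)
    ((w.iff_of_mem_support hP b.1 (hsupport hb)).mpr hPu)

end IsColouredCycleWith

end

theorem coloured_cycles_directed_and_unique_general
    {V X : Type*} [DecidableEq V]
    (A : Finset (V × V)) (lab : V × V → Finset X)
    (hdisj : ∀ a ∈ A, ∀ b ∈ A, a ≠ b → a.1 = b.1 → Disjoint (lab a) (lab b)) :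
    (∀ S : Finset (V × V), IsColouredCycle A lab S → IsDirectedCycleSet S) ∧
    (∀ a ∈ A, ∀ x ∈ lab a, ∀ S1 S2 : Finset (V × V),
      IsColouredCycleWith A lab x S1 → IsColouredCycleWith A lab x S2 →
      a ∈ S1 → a ∈ S2 → S1 = S2) :=
  ⟨fun _ ⟨_, hS⟩ => hS.isDirectedCycleSet hdisj,
    fun _ _ _ _ _ _ h₁ h₂ ha₁ ha₂ =>
      (h₁.subset_of_mem_of_mem hdisj h₂ ha₁ ha₂).antisymm
        (h₂.subset_of_mem_of_mem hdisj h₁ ha₂ ha₁)⟩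

/-- If in a finite arc-labeled digraph (labels being 2-element sets) any two
distinct arcs leaving the same vertex have disjoint labels, then every coloured
cycle is a directed cycle, and every arc `a` with `λ(a) = {x, y}` lies in at most
one `x`-coloured cycle and at most one `y`-coloured cycle. -/
theorem coloured_cycles_directed_and_unique
    {V X : Type*} [Fintype V] [DecidableEq V] [DecidableEq X]
    (A : Finset (V × V)) (lab : V × V → Finset X)
    (harc : ∀ a ∈ A, a.1 ≠ a.2)
    (hlab : ∀ a ∈ A, (lab a).card = 2)
    (hdisj : ∀ a ∈ A, ∀ b ∈ A, a ≠ b → a.1 = b.1 → Disjoint (lab a) (lab b)) :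
    (∀ S : Finset (V × V), IsColouredCycle A lab S → IsDirectedCycleSet S) ∧
    (∀ a ∈ A, ∀ x ∈ lab a, ∀ S1 S2 : Finset (V × V),
      IsColouredCycleWith A lab x S1 → IsColouredCycleWith A lab x S2 →
      a ∈ S1 → a ∈ S2 → S1 = S2) :=
  coloured_cycles_directed_and_unique_general A lab hdisj
end
end
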